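/- arXiv:1512.00290 — 9 statements merged into one kernel-verified Lean document; each statement's English description precedes it below -/
import Mathlib

section
/- Let S be a similarity of ℝ³ which is a composition of a homothety with fixed point c and a rotation around a line l containing c, and let P be a plane containing l. Let B(a,r) be a closed ball with center a and radius r that is disjoint from P (i.e. dist(a,P) > r). Then for all x, y in B(a,r), ‖S(x) − x‖ / ‖S(y) − y‖ ≤ (dist(a,P) + r)/(dist(a,P) − r). -/
/-!
Write `S z - z = g (z - c)` with the linear map `g = l • R - id`. Splitting `v = t • u + p` along
the axis and its orthogonal plane, on which `R` is a planar rotation by some angle `θ`, gives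
`‖g v‖² = (l - 1)² t² + K² ‖p‖²` with `K² = l² - 2 l cos θ + 1 ≥ (l - 1)²` (as `l > 0`). Hence
`‖g v‖ ≤ K ‖v‖`, while `‖g v‖ ≥ K ‖p‖ = K · dist (c + v, axis) ≥ K · dist (c + v, P)` because the
axis lies in `P`. With `F = ‖g (a - c)‖ ≥ K · dist (a, P)`, linearity of `g` bounds the numerator by
`F + K r` and the denominator from below by `F - K r`, and `(F + K r) / (F - K r)` decreases in `F`.
-/

open Metric
open scoped RealInnerProductSpace

section

variable {E : Type*} [NormedAddCommGroup E] [InnerProductSpace ℝ E]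

theorem inner_sub_inner_smul_self {u : E} (hu : ‖u‖ = 1) (v : E) : ⟪u, v - ⟪u, v⟫ • u⟫ = 0 := by
  rw [inner_sub_right, real_inner_smul_right, real_inner_self_eq_norm_sq, hu]
  ring

theorem norm_sq_eq_inner_sq_add_norm_sub_sq {u : E} (hu : ‖u‖ = 1) (v : E) :
    ‖v‖ ^ 2 = ⟪u, v⟫ ^ 2 + ‖v - ⟪u, v⟫ • u‖ ^ 2 := by
  conv_lhs => rw [← add_sub_cancel (⟪u, v⟫ • u) v]
  rw [norm_add_sq_real, real_inner_smul_left, inner_sub_inner_smul_self hu, norm_smul, hu,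
    mul_one, Real.norm_eq_abs, sq_abs]
  ring

theorem exists_orthonormalBasis_apply_eq {ι : Type*} [Fintype ι] [FiniteDimensional ℝ E]
    (hE : Module.finrank ℝ E = Fintype.card ι) (i : ι) {u : E} (hu : ‖u‖ = 1) :
    ∃ b : OrthonormalBasis ι ℝ E, b i = u := by
  have hu' : Orthonormal ℝ (Set.domRestrict {i} fun _ => u) := by
    rw [orthonormal_iff_ite]
    rintro ⟨j, rfl⟩ ⟨k, rfl⟩
    simp [Set.domRestrict, hu]
  obtain ⟨b, hb⟩ := hu'.exists_orthonormalBasis_extension_of_card_eq hE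
  exact ⟨b, hb i rfl⟩

theorem LinearIsometryEquiv.exists_inner_map_self_eq_mul_norm_sq
    (hE : Module.finrank ℝ E = 3) (R : E ≃ₗᵢ[ℝ] E)
    (hdet : LinearMap.det (R.toLinearEquiv : E →ₗ[ℝ] E) = 1) {u : E} (hu : ‖u‖ = 1)
    (hRu : R u = u) :
    ∃ α ≤ 1, ∀ p, ⟪u, p⟫ = 0 → ⟪R p, p⟫ = α * ‖p‖ ^ 2 := by
  have := Module.finite_of_finrank_eq_succ hE
  obtain ⟨b, rfl⟩ := exists_orthonormalBasis_apply_eq (hE.trans (Fintype.card_fin 3).symm) 0 hu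
  have hb := orthonormal_iff_ite.mp b.orthonormal
  set m : Fin 3 → Fin 3 → ℝ := fun i j => ⟪b i, R (b j)⟫
  have hcol0 (i : Fin 3) : m i 0 = ⟪b i, b 0⟫ := by simp only [m, hRu]
  have hrow0 (j : Fin 3) : m 0 j = ⟪b 0, b j⟫ := by
    calc m 0 j = ⟪R (b 0), R (b j)⟫ := by rw [hRu]
      _ = ⟪b 0, b j⟫ := R.inner_map_map _ _
  have hcols (j k : Fin 3) : ∑ i, m i j * m i k = ⟪b j, b k⟫ := by
    rw [← R.inner_map_map, ← b.sum_inner_mul_inner]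
    simp only [m, real_inner_comm]
  have hdet' : (Matrix.of m).det = 1 := by
    rw [← hdet, ← LinearMap.det_toMatrix b.toBasis]
    congr 1
    ext i j
    rw [LinearMap.toMatrix_apply, OrthonormalBasis.coe_toBasis_repr_apply,
      OrthonormalBasis.coe_toBasis, b.repr_apply_apply]
    rfl
  -- In the basis `(u, b 1, b 2)` the matrix of `R` is block diagonal with an orthogonal `2 × 2`
  -- block of determinant `1`, which forces the rotation shape `!![α, -β; β, α]`.
  have h11 := hcols 1 1
  have h12 := hcols 1 2
  simp only [Fin.sum_univ_three, hrow0, hb] at h11 h12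
  rw [Matrix.det_fin_three] at hdet'
  simp only [Matrix.of_apply, hcol0, hrow0, hb] at hdet'
  norm_num [Fin.ext_iff] at h11 h12 hdet'
  have h21 : m 1 2 = -m 2 1 := by linear_combination (-m 1 2) * h11 - m 2 1 * hdet' + m 1 1 * h12
  have h22 : m 2 2 = m 1 1 := by linear_combination (-m 2 2) * h11 + m 1 1 * hdet' + m 2 1 * h12
  refine ⟨m 1 1, by nlinarith, fun p hp => ?_⟩
  have hRp (i : Fin 3) : ⟪b i, R p⟫ = ∑ j, m i j * ⟪b j, p⟫ := by
    conv_lhs => rw [← b.sum_repr' p]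
    simp only [map_sum, map_smul, inner_sum, real_inner_smul_right, m, mul_comm]
  rw [← b.sum_sq_inner_right, real_inner_comm, ← b.sum_inner_mul_inner]
  simp only [Fin.sum_univ_three, ← real_inner_comm p, hRp, hp, hcol0, hrow0, hb]
  norm_num [Fin.ext_iff]
  rw [h21, h22]
  ring

theorem norm_smul_map_sub_sq {u : E} (hu : ‖u‖ = 1) {R : E →ₗᵢ[ℝ] E} (hRu : R u = u) {α : ℝ}
    (hα : ∀ p, ⟪u, p⟫ = 0 → ⟪R p, p⟫ = α * ‖p‖ ^ 2) (l : ℝ) (v : E) :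
    ‖l • R v - v‖ ^ 2 =
      (l - 1) ^ 2 * ⟪u, v⟫ ^ 2 + (l ^ 2 - 2 * l * α + 1) * ‖v - ⟪u, v⟫ • u‖ ^ 2 := by
  set t := ⟪u, v⟫
  set p := v - t • u
  have hup : ⟪u, p⟫ = 0 := inner_sub_inner_smul_self hu v
  have hu_Rp : ⟪u, R p⟫ = 0 := by rw [← hRu, R.inner_map_map, hup]
  have hsplit : l • R v - v = ((l - 1) * t) • u + (l • R p - p) := by
    simp only [p, map_sub, map_smul, hRu]
    module
  have horth : ⟪((l - 1) * t) • u, l • R p - p⟫ = 0 := by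
    rw [real_inner_smul_left, inner_sub_right, real_inner_smul_right, hu_Rp, hup]
    ring
  rw [hsplit, norm_add_sq_real, horth, norm_sub_sq_real, real_inner_smul_left, hα p hup,
    norm_smul, norm_smul, R.norm_map, hu, Real.norm_eq_abs, Real.norm_eq_abs, mul_pow, mul_pow,
    sq_abs, sq_abs]
  ring

theorem exists_norm_smul_map_sub_bounds {u : E} (hu : ‖u‖ = 1) {R : E →ₗᵢ[ℝ] E} (hRu : R u = u)
    {α : ℝ} (hα1 : α ≤ 1) (hα : ∀ p, ⟪u, p⟫ = 0 → ⟪R p, p⟫ = α * ‖p‖ ^ 2) {l : ℝ} (hl : 0 ≤ l) :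
    ∃ K, 0 ≤ K ∧ (∀ v, ‖l • R v - v‖ ≤ K * ‖v‖) ∧
      ∀ v, K * ‖v - ⟪u, v⟫ • u‖ ≤ ‖l • R v - v‖ := by
  have hQ : (l - 1) ^ 2 ≤ l ^ 2 - 2 * l * α + 1 := by nlinarith
  set K := √(l ^ 2 - 2 * l * α + 1)
  have hK : K ^ 2 = l ^ 2 - 2 * l * α + 1 := Real.sq_sqrt ((sq_nonneg _).trans hQ)
  have hK0 : 0 ≤ K := Real.sqrt_nonneg _
  refine ⟨K, hK0, fun v => ?_, fun v => ?_⟩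
  · rw [← pow_le_pow_iff_left₀ (norm_nonneg _) (by positivity) two_ne_zero, mul_pow,
      norm_smul_map_sub_sq hu hRu hα, norm_sq_eq_inner_sq_add_norm_sub_sq hu v, hK]
    nlinarith [sq_nonneg ⟪u, v⟫]
  · rw [← pow_le_pow_iff_left₀ (by positivity) (norm_nonneg _) two_ne_zero, mul_pow,
      norm_smul_map_sub_sq hu hRu hα, hK]
    nlinarith [sq_nonneg ⟪u, v⟫, sq_nonneg (l - 1)]

theorem infDist_le_norm_sub_inner_smul {P : AffineSubspace ℝ E} {c u : E} (hcP : c ∈ P)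
    (huP : u ∈ P.direction) (a : E) :
    infDist a P ≤ ‖(a - c) - ⟪u, a - c⟫ • u‖ := by
  have hmem : ⟪u, a - c⟫ • u +ᵥ c ∈ P :=
    AffineSubspace.vadd_mem_of_mem_direction (P.direction.smul_mem _ huP) hcP
  calc infDist a P ≤ dist a (⟪u, a - c⟫ • u +ᵥ c) := infDist_le_dist_of_mem hmem
    _ = ‖(a - c) - ⟪u, a - c⟫ • u‖ := by rw [dist_eq_norm, vadd_eq_add, sub_add_eq_sub_sub_swap]

end

theorem norm_div_norm_le_of_mem_closedBall {E F : Type*} [SeminormedAddCommGroup E]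
    [NormedSpace ℝ E] [SeminormedAddCommGroup F] [NormedSpace ℝ F] (g : E →ₗ[ℝ] F) {K d r : ℝ}
    (hK : 0 ≤ K) (hg : ∀ v, ‖g v‖ ≤ K * ‖v‖) {a x y : E} (hd : K * d ≤ ‖g a‖) (hrd : r < d)
    (hx : x ∈ closedBall a r) (hy : y ∈ closedBall a r) :
    ‖g x‖ / ‖g y‖ ≤ (d + r) / (d - r) := by
  have hr : 0 ≤ r := dist_nonneg.trans hx
  have hg_ball {z : E} (hz : z ∈ closedBall a r) : ‖g z - g a‖ ≤ K * r := by
    rw [← map_sub]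
    exact (hg _).trans (mul_le_mul_of_nonneg_left (dist_eq_norm z a ▸ hz) hK)
  have hxa : ‖g x‖ ≤ ‖g a‖ + K * r := by
    linarith [norm_sub_norm_le (g x) (g a), hg_ball hx]
  have hya : ‖g a‖ - K * r ≤ ‖g y‖ := by
    linarith [norm_sub_norm_le (g a) (g y), hg_ball hy, norm_sub_rev (g y) (g a)]
  rcases (norm_nonneg (g y)).eq_or_lt with hy0 | hy0
  · rw [← hy0, div_zero]
    exact div_nonneg (by linarith) (by linarith)
  · rw [div_le_div_iff₀ hy0 (by linarith)]
    nlinarith [norm_nonneg (g x)]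

theorem stmt_0_general
    (c u : EuclideanSpace ℝ (Fin 3)) (hu : ‖u‖ = 1)
    (l : ℝ) (hl : 0 < l)
    (R : EuclideanSpace ℝ (Fin 3) ≃ₗᵢ[ℝ] EuclideanSpace ℝ (Fin 3))
    (hdet : LinearMap.det (R.toLinearEquiv : EuclideanSpace ℝ (Fin 3) →ₗ[ℝ] EuclideanSpace ℝ (Fin 3)) = 1)
    (haxis : R u = u)
    (S : EuclideanSpace ℝ (Fin 3) → EuclideanSpace ℝ (Fin 3))
    (hS : ∀ x, S x = c + l • R (x - c))
    (P : AffineSubspace ℝ (EuclideanSpace ℝ (Fin 3)))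
    (hcP : c ∈ P) (huP : u ∈ P.direction)
    (a : EuclideanSpace ℝ (Fin 3)) (r : ℝ)
    (hdisj : r < Metric.infDist a (P : Set (EuclideanSpace ℝ (Fin 3))))
    (x y : EuclideanSpace ℝ (Fin 3))
    (hx : x ∈ closedBall a r) (hy : y ∈ closedBall a r) :
    ‖S x - x‖ / ‖S y - y‖ ≤
      (Metric.infDist a (P : Set (EuclideanSpace ℝ (Fin 3))) + r) /
        (Metric.infDist a (P : Set (EuclideanSpace ℝ (Fin 3))) - r) := by
  obtain ⟨α, hα1, hα⟩ :=
    R.exists_inner_map_self_eq_mul_norm_sq finrank_euclideanSpace_fin hdet hu haxis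
  obtain ⟨K, hK, hupper, hlower⟩ :=
    exists_norm_smul_map_sub_bounds (R := R.toLinearIsometry) hu haxis hα1 hα hl.le
  let g := l • R.toLinearEquiv.toLinearMap - LinearMap.id
  have hSg (z) : S z - z = g (z - c) := by
    rw [hS]
    simp only [g, LinearMap.sub_apply, LinearMap.smul_apply, LinearMap.id_apply,
      LinearEquiv.coe_coe, LinearIsometryEquiv.coe_toLinearEquiv]
    abel
  rw [hSg, hSg]
  have hball {z} (hz : z ∈ closedBall a r) : z - c ∈ closedBall (a - c) r := by
    rwa [mem_closedBall, dist_sub_right]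
  refine norm_div_norm_le_of_mem_closedBall g hK hupper ?_ hdisj (hball hx) (hball hy)
  calc K * infDist a P ≤ K * ‖(a - c) - ⟪u, a - c⟫ • u‖ :=
        mul_le_mul_of_nonneg_left (infDist_le_norm_sub_inner_smul hcP huP a) hK
    _ ≤ ‖g (a - c)‖ := hlower _

theorem stmt_0
    (c u : EuclideanSpace ℝ (Fin 3)) (hu : ‖u‖ = 1)
    (l : ℝ) (hl : 0 < l)
    (R : EuclideanSpace ℝ (Fin 3) ≃ₗᵢ[ℝ] EuclideanSpace ℝ (Fin 3))
    (hdet : LinearMap.det (R.toLinearEquiv : EuclideanSpace ℝ (Fin 3) →ₗ[ℝ] EuclideanSpace ℝ (Fin 3)) = 1)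
    (haxis : R u = u)
    (S : EuclideanSpace ℝ (Fin 3) → EuclideanSpace ℝ (Fin 3))
    (hS : ∀ x, S x = c + l • R (x - c))
    (P : AffineSubspace ℝ (EuclideanSpace ℝ (Fin 3)))
    (hcP : c ∈ P) (huP : u ∈ P.direction)
    (hplane : Module.finrank ℝ P.direction = 2)
    (a : EuclideanSpace ℝ (Fin 3)) (r : ℝ) (hr : 0 ≤ r)
    (hdisj : r < Metric.infDist a (P : Set (EuclideanSpace ℝ (Fin 3))))
    (x y : EuclideanSpace ℝ (Fin 3))
    (hx : x ∈ closedBall a r) (hy : y ∈ closedBall a r) :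
    ‖S x - x‖ / ‖S y - y‖ ≤
      (Metric.infDist a (P : Set (EuclideanSpace ℝ (Fin 3))) + r) /
        (Metric.infDist a (P : Set (EuclideanSpace ℝ (Fin 3))) - r) :=
  stmt_0_general c u hu l hl R hdet haxis S hS P hcP huP a r hdisj x y hx hy
end

section
/- Let 0 < α < π/2 and let e₁, e₂, e₃ be unit vectors in ℝ³ such that the angle between each pair eᵢ, eⱼ (i ≠ j) lies between π/2 − α and π/2 + α, equivalently |⟨eᵢ, eⱼ⟩| ≤ sin α for i ≠ j. Let λ₁ ≤ rᵢ ≤ λ₂ with λ₁ > 0. Then for any x = (x₁, x₂, x₃) ∈ ℝ³ (assuming 2 sin α < 1), λ₁·√(1 − 2 sin α)·‖x‖ ≤ ‖x₁r₁e₁ + x₂r₂e₂ + x₃r₃e₃‖ ≤ λ₂·√(1 + 2 sin α)·‖x‖. -/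
/-!
Expanding `‖∑ yᵢ eᵢ‖²` gives `∑ yᵢ²` plus the off-diagonal Gram terms `yᵢ yⱼ ⟨eᵢ, eⱼ⟩`. Each of
these is at most `s (yᵢ² + yⱼ²) / 2` in absolute value, so for `n` almost orthogonal unit vectors
`‖∑ yᵢ eᵢ‖²` lies within `(n - 1) s ∑ yᵢ²` of `∑ yᵢ²` (a Gershgorin bound for the Gram matrix).
With `yᵢ = xᵢ rᵢ` and `λ₁ ≤ rᵢ ≤ λ₂`, `∑ yᵢ²` lies between `λ₁² ‖x‖²` and `λ₂² ‖x‖²`.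
-/

open Real Finset

section AlmostOrthogonal

open scoped RealInnerProductSpace

variable {E ι : Type*} [NormedAddCommGroup E] [InnerProductSpace ℝ E] [Fintype ι]

theorem norm_sum_smul_sq (y : ι → ℝ) (e : ι → E) :
    ‖∑ i, y i • e i‖ ^ 2 = ∑ i, ∑ j, y i * y j * ⟪e i, e j⟫ := by
  rw [← real_inner_self_eq_norm_sq, sum_inner]
  simp only [inner_sum, real_inner_smul_left, real_inner_smul_right]
  exact sum_congr rfl fun i _ => sum_congr rfl fun j _ => by ring

theorem abs_norm_sum_smul_sq_sub_sum_sq_le {e : ι → E} {s : ℝ} (he : ∀ i, ‖e i‖ = 1)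
    (hs : ∀ i j, i ≠ j → |⟪e i, e j⟫| ≤ s) (y : ι → ℝ) :
    |‖∑ i, y i • e i‖ ^ 2 - ∑ i, y i ^ 2| ≤ (Fintype.card ι - 1) * s * ∑ i, y i ^ 2 := by
  classical
  have hterm : ∀ i j, |y i * y j * (⟪e i, e j⟫ - if i = j then 1 else 0)|
      ≤ s / 2 * (y i ^ 2 + y j ^ 2) - if i = j then s * y i ^ 2 else 0 := by
    intro i j
    by_cases hij : i = j
    · subst hij
      rw [if_pos rfl, if_pos rfl, real_inner_self_eq_norm_sq, he]
      exact le_of_eq (by ring_nf; simp)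
    · have hs0 : 0 ≤ s := (abs_nonneg _).trans (hs i j hij)
      simp only [hij, if_false, sub_zero, abs_mul]
      calc |y i| * |y j| * |⟪e i, e j⟫| ≤ |y i| * |y j| * s := by gcongr; exact hs i j hij
        _ ≤ s / 2 * (y i ^ 2 + y j ^ 2) := by
          nlinarith [mul_nonneg hs0 (sq_nonneg (|y i| - |y j|)), sq_abs (y i), sq_abs (y j)]
  have hdiff : ‖∑ i, y i • e i‖ ^ 2 - ∑ i, y i ^ 2
      = ∑ i, ∑ j, y i * y j * (⟪e i, e j⟫ - if i = j then 1 else 0) := by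
    rw [norm_sum_smul_sq]
    simp [mul_sub, sum_sub_distrib, sq]
  have hsum : ∑ i, ∑ j, (s / 2 * (y i ^ 2 + y j ^ 2) - if i = j then s * y i ^ 2 else 0)
      = (Fintype.card ι - 1) * s * ∑ i, y i ^ 2 := by
    simp [sum_sub_distrib, mul_add, sum_add_distrib, ← mul_sum]
    ring
  rw [hdiff, ← hsum]
  exact (abs_sum_le_sum_abs _ _).trans <| sum_le_sum fun i _ =>
    (abs_sum_le_sum_abs _ _).trans <| sum_le_sum fun j _ => hterm i j

end AlmostOrthogonal

section WeightedSums

variable {ι : Type*} [Fintype ι] (x r : ι → ℝ)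

theorem sq_mul_sum_sq_le_sum_mul_sq {l : ℝ} (hl : 0 ≤ l) (hr : ∀ i, l ≤ r i) :
    l ^ 2 * ∑ i, x i ^ 2 ≤ ∑ i, (x i * r i) ^ 2 := by
  rw [mul_sum]
  gcongr with i
  rw [mul_pow, mul_comm]
  gcongr
  exact hr i

theorem sum_mul_sq_le_sq_mul_sum_sq {l : ℝ} (hr : ∀ i, |r i| ≤ l) :
    ∑ i, (x i * r i) ^ 2 ≤ l ^ 2 * ∑ i, x i ^ 2 := by
  rw [mul_sum]
  gcongr with i
  rw [mul_pow, mul_comm, ← sq_abs (r i)]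
  gcongr
  exact hr i

end WeightedSums

theorem stmt_1_general
    (α : ℝ) (hsin : 2 * Real.sin α < 1)
    (e : Fin 3 → EuclideanSpace ℝ (Fin 3)) (he : ∀ i, ‖e i‖ = 1)
    (hangle : ∀ i j, i ≠ j → |(inner ℝ (e i) (e j) : ℝ)| ≤ Real.sin α)
    (r : Fin 3 → ℝ) (l₁ l₂ : ℝ) (hl₁ : 0 < l₁)
    (hr : ∀ i, l₁ ≤ r i ∧ r i ≤ l₂)
    (x : EuclideanSpace ℝ (Fin 3)) :
    l₁ * Real.sqrt (1 - 2 * Real.sin α) * ‖x‖ ≤ ‖∑ i, (x i * r i) • e i‖ ∧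
      ‖∑ i, (x i * r i) • e i‖ ≤ l₂ * Real.sqrt (1 + 2 * Real.sin α) * ‖x‖ := by
  have hgram := abs_le.mp (abs_norm_sum_smul_sq_sub_sum_sq_le he hangle fun i => x i * r i)
  norm_num only [Fintype.card_fin] at hgram
  have hs : 0 ≤ Real.sin α := (abs_nonneg _).trans (hangle 0 1 (by decide))
  have hl₂ : 0 < l₂ := hl₁.trans_le ((hr 0).1.trans (hr 0).2)
  rw [← sq_le_sq₀ (by positivity) (norm_nonneg _), ← sq_le_sq₀ (norm_nonneg _) (by positivity),
    mul_pow, mul_pow, mul_pow, mul_pow, sq_sqrt (by linarith), sq_sqrt (by linarith),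
    EuclideanSpace.real_norm_sq_eq]
  constructor
  · calc l₁ ^ 2 * (1 - 2 * Real.sin α) * ∑ i, x i ^ 2
        = (1 - 2 * Real.sin α) * (l₁ ^ 2 * ∑ i, x i ^ 2) := by ring
      _ ≤ (1 - 2 * Real.sin α) * ∑ i, (x i * r i) ^ 2 := by
        gcongr
        exact sq_mul_sum_sq_le_sum_mul_sq x r hl₁.le fun i => (hr i).1
      _ ≤ _ := by linarith
  · calc _ ≤ (1 + 2 * Real.sin α) * ∑ i, (x i * r i) ^ 2 := by linarith
      _ ≤ (1 + 2 * Real.sin α) * (l₂ ^ 2 * ∑ i, x i ^ 2) := by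
        gcongr
        exact sum_mul_sq_le_sq_mul_sum_sq x r fun i =>
          abs_le.mpr ⟨by linarith [hr i], (hr i).2⟩
      _ = _ := by ring

theorem stmt_1
    (α : ℝ) (hα0 : 0 < α) (hα1 : α < π / 2) (hsin : 2 * Real.sin α < 1)
    (e : Fin 3 → EuclideanSpace ℝ (Fin 3)) (he : ∀ i, ‖e i‖ = 1)
    (hangle : ∀ i j, i ≠ j → |(inner ℝ (e i) (e j) : ℝ)| ≤ Real.sin α)
    (r : Fin 3 → ℝ) (l₁ l₂ : ℝ) (hl₁ : 0 < l₁)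
    (hr : ∀ i, l₁ ≤ r i ∧ r i ≤ l₂)
    (x : EuclideanSpace ℝ (Fin 3)) :
    l₁ * Real.sqrt (1 - 2 * Real.sin α) * ‖x‖ ≤ ‖∑ i, (x i * r i) • e i‖ ∧
      ‖∑ i, (x i * r i) • e i‖ ≤ l₂ * Real.sqrt (1 + 2 * Real.sin α) * ‖x‖ :=
  stmt_1_general α hsin e he hangle r l₁ l₂ hl₁ hr x
end

section
/- Let φ, ψ : B³ × [0,1] → ℝ³ be continuous maps, where B³ is the closed unit ball in ℝ³, such that (1) φ and ψ are α-Hölder in t uniformly in x, and (2) for any t, s ∈ [0,1], the function x ↦ φ(x,t) − ψ(x,s) is bi-Lipschitz in x with uniform constants. Then the Hausdorff dimension of the set Δ = {x ∈ B³ : φ(x,[0,1]) ∩ ψ(x,[0,1]) ≠ ∅} is at most 2/α. -/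
open Set Metric
open scoped NNReal

noncomputable section

/-!
For `p = (t, s)` put `F x p = φ x t - ψ x s`. A point `x` of the ball lies in `Δ` exactly when
`F x p = 0` for some `p ∈ [0,1]²`, and by the lower bi-Lipschitz bound this `x` is unique. Writing
`x = root p`, comparing `F (root p) q` with `F (root q) q = 0` and `F (root p) p = 0` gives
`c ‖root p - root q‖ ≤ 2M ‖p - q‖^α`, so `root` is `α`-Hölder and
`dimH Δ ≤ dimH [0,1]² / α ≤ 2 / α`.
-/

section ZeroLocus

variable {X P E : Type*} [MetricSpace X] [MetricSpace P] [SeminormedAddCommGroup E]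
  {F : X → P → E} {B : Set X} {T : Set P} {c K : ℝ} {r : ℝ≥0}

theorem dist_le_of_eq_zero_of_eq_zero (hc : 0 < c)
    (hexp : ∀ p ∈ T, ∀ x ∈ B, ∀ y ∈ B, c * dist x y ≤ dist (F x p) (F y p))
    (hholder : ∀ x ∈ B, ∀ p ∈ T, ∀ q ∈ T, dist (F x p) (F x q) ≤ K * dist p q ^ (r : ℝ))
    {x y : X} {p q : P} (hx : x ∈ B) (hy : y ∈ B) (hp : p ∈ T) (hq : q ∈ T)
    (hxp : F x p = 0) (hyq : F y q = 0) :
    dist x y ≤ K / c * dist p q ^ (r : ℝ) := by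
  rw [div_mul_eq_mul_div, le_div_iff₀ hc, mul_comm]
  calc c * dist x y ≤ dist (F x q) (F y q) := hexp q hq x hx y hy
    _ = dist (F x p) (F x q) := by rw [hxp, hyq, dist_comm]
    _ ≤ K * dist p q ^ (r : ℝ) := hholder x hx p hp q hq

theorem dimH_setOf_exists_eq_zero_le (hc : 0 < c) (hr : 0 < r)
    (hexp : ∀ p ∈ T, ∀ x ∈ B, ∀ y ∈ B, c * dist x y ≤ dist (F x p) (F y p))
    (hholder : ∀ x ∈ B, ∀ p ∈ T, ∀ q ∈ T, dist (F x p) (F x q) ≤ K * dist p q ^ (r : ℝ)) :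
    dimH {x | x ∈ B ∧ ∃ p ∈ T, F x p = 0} ≤ dimH T / r := by
  rcases isEmpty_or_nonempty X with hX | hX
  · simp [Set.eq_empty_of_isEmpty]
  set S := {p | p ∈ T ∧ ∃ x ∈ B, F x p = 0}
  let root : P → X := fun p => Classical.epsilon fun x => x ∈ B ∧ F x p = 0
  have root_spec : ∀ p ∈ S, root p ∈ B ∧ F (root p) p = 0 := fun p hp =>
    Classical.epsilon_spec hp.2
  have hdist {x : X} {p q : P} (hx : x ∈ B) (hp : p ∈ T) (hxp : F x p = 0) (hq : q ∈ S) :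
      dist x (root q) ≤ K / c * dist p q ^ (r : ℝ) :=
    dist_le_of_eq_zero_of_eq_zero hc hexp hholder hx (root_spec q hq).1 hp hq.1 hxp
      (root_spec q hq).2
  have hroot : HolderOnWith (K / c).toNNReal r root S := by
    intro p hp q hq
    rw [edist_dist, edist_dist, ENNReal.ofReal_rpow_of_nonneg dist_nonneg r.coe_nonneg,
      ENNReal.coe_nnreal_eq, ← ENNReal.ofReal_mul' (by positivity)]
    exact ENNReal.ofReal_le_ofReal <| (hdist (root_spec p hp).1 hp.1 (root_spec p hp).2 hq).trans
      (mul_le_mul_of_nonneg_right (le_max_left _ _) (by positivity))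
  have hsub : {x | x ∈ B ∧ ∃ p ∈ T, F x p = 0} ⊆ root '' S := by
    rintro x ⟨hx, p, hp, hxp⟩
    refine ⟨p, ⟨hp, x, hx, hxp⟩, (dist_le_zero.1 ?_).symm⟩
    simpa [hr.ne'] using hdist hx hp hxp ⟨hp, x, hx, hxp⟩
  calc dimH {x | x ∈ B ∧ ∃ p ∈ T, F x p = 0} ≤ dimH (root '' S) := dimH_mono hsub
    _ ≤ dimH S / r := hroot.dimH_image_le hr
    _ ≤ dimH T / r := by gcongr; exact sep_subset _ _

end ZeroLocus

theorem dist_sub_sub_le_of_holder {Y E : Type*} [PseudoMetricSpace Y] [SeminormedAddCommGroup E]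
    {f g : Y → E} {I : Set Y} {M r : ℝ} (hM : 0 ≤ M) (hr : 0 ≤ r)
    (hf : ∀ t ∈ I, ∀ s ∈ I, ‖f t - f s‖ ≤ M * dist t s ^ r)
    (hg : ∀ t ∈ I, ∀ s ∈ I, ‖g t - g s‖ ≤ M * dist t s ^ r)
    {p q : Y × Y} (hp : p ∈ I ×ˢ I) (hq : q ∈ I ×ˢ I) :
    dist (f p.1 - g p.2) (f q.1 - g q.2) ≤ 2 * M * dist p q ^ r := by
  have hmono {a b : Y} (h : dist a b ≤ dist p q) : M * dist a b ^ r ≤ M * dist p q ^ r := by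
    gcongr
  rw [dist_eq_norm, sub_sub_sub_comm]
  calc ‖f p.1 - f q.1 - (g p.2 - g q.2)‖ ≤ ‖f p.1 - f q.1‖ + ‖g p.2 - g q.2‖ := norm_sub_le _ _
    _ ≤ M * dist p q ^ r + M * dist p q ^ r :=
      add_le_add ((hf _ hp.1 _ hq.1).trans (hmono (le_max_left _ _)))
        ((hg _ hp.2 _ hq.2).trans (hmono (le_max_right _ _)))
    _ = 2 * M * dist p q ^ r := by ring

theorem stmt_5_general
    (φ ψ : EuclideanSpace ℝ (Fin 3) → ℝ → EuclideanSpace ℝ (Fin 3))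
    (α M c L : ℝ) (hα0 : 0 < α) (hc : 0 < c)
    (hφHolder : ∀ x ∈ closedBall (0 : EuclideanSpace ℝ (Fin 3)) 1,
      ∀ t ∈ Icc (0:ℝ) 1, ∀ s ∈ Icc (0:ℝ) 1, ‖φ x t - φ x s‖ ≤ M * |t - s| ^ α)
    (hψHolder : ∀ x ∈ closedBall (0 : EuclideanSpace ℝ (Fin 3)) 1,
      ∀ t ∈ Icc (0:ℝ) 1, ∀ s ∈ Icc (0:ℝ) 1, ‖ψ x t - ψ x s‖ ≤ M * |t - s| ^ α)
    (hbilip : ∀ t ∈ Icc (0:ℝ) 1, ∀ s ∈ Icc (0:ℝ) 1,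
      ∀ x₁ ∈ closedBall (0 : EuclideanSpace ℝ (Fin 3)) 1,
      ∀ x₂ ∈ closedBall (0 : EuclideanSpace ℝ (Fin 3)) 1,
        c * ‖x₁ - x₂‖ ≤ ‖(φ x₁ t - ψ x₁ s) - (φ x₂ t - ψ x₂ s)‖ ∧
        ‖(φ x₁ t - ψ x₁ s) - (φ x₂ t - ψ x₂ s)‖ ≤ L * ‖x₁ - x₂‖) :
    dimH {x | x ∈ closedBall (0 : EuclideanSpace ℝ (Fin 3)) 1 ∧
        ((fun t => φ x t) '' Icc (0:ℝ) 1 ∩ (fun t => ψ x t) '' Icc (0:ℝ) 1).Nonempty} ≤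
      2 / ENNReal.ofReal α := by
  have hM : 0 ≤ M := (norm_nonneg _).trans <| by
    simpa using hφHolder 0 (mem_closedBall_self zero_le_one) 0 (by simp) 1 (by simp)
  have hΔ : {x | x ∈ closedBall (0 : EuclideanSpace ℝ (Fin 3)) 1 ∧
      ((fun t => φ x t) '' Icc (0:ℝ) 1 ∩ (fun t => ψ x t) '' Icc (0:ℝ) 1).Nonempty} =
      {x | x ∈ closedBall 0 1 ∧ ∃ p ∈ Icc (0:ℝ) 1 ×ˢ Icc (0:ℝ) 1, φ x p.1 - ψ x p.2 = 0} := by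
    ext x
    simp only [mem_ofPred_eq, Set.Nonempty, mem_inter_iff, mem_image, Prod.exists, mem_prod,
      sub_eq_zero]
    grind
  have hsquare : dimH (Icc (0:ℝ) 1 ×ˢ Icc (0:ℝ) 1) ≤ 2 := by
    simpa using (dimH_mono (subset_univ _)).trans_eq (Real.dimH_univ_eq_finrank (ℝ × ℝ))
  rw [hΔ]
  calc _ ≤ dimH (Icc (0:ℝ) 1 ×ˢ Icc (0:ℝ) 1) / α.toNNReal :=
        dimH_setOf_exists_eq_zero_le hc (Real.toNNReal_pos.2 hα0)
          (fun p hp x hx y hy => by simpa [dist_eq_norm] using (hbilip _ hp.1 _ hp.2 x hx y hy).1)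
          (fun x hx p hp q hq => by
            simpa [Real.coe_toNNReal _ hα0.le] using dist_sub_sub_le_of_holder hM hα0.le
              (hφHolder x hx) (hψHolder x hx) hp hq)
    _ ≤ 2 / ENNReal.ofReal α := ENNReal.div_le_div_right hsquare _

theorem stmt_5
    (φ ψ : EuclideanSpace ℝ (Fin 3) → ℝ → EuclideanSpace ℝ (Fin 3))
    (α M c L : ℝ) (hα0 : 0 < α) (hα1 : α ≤ 1) (hc : 0 < c) (hcL : c ≤ L)
    (hφcont : Continuous fun p : EuclideanSpace ℝ (Fin 3) × ℝ => φ p.1 p.2)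
    (hψcont : Continuous fun p : EuclideanSpace ℝ (Fin 3) × ℝ => ψ p.1 p.2)
    (hφHolder : ∀ x ∈ closedBall (0 : EuclideanSpace ℝ (Fin 3)) 1,
      ∀ t ∈ Icc (0:ℝ) 1, ∀ s ∈ Icc (0:ℝ) 1, ‖φ x t - φ x s‖ ≤ M * |t - s| ^ α)
    (hψHolder : ∀ x ∈ closedBall (0 : EuclideanSpace ℝ (Fin 3)) 1,
      ∀ t ∈ Icc (0:ℝ) 1, ∀ s ∈ Icc (0:ℝ) 1, ‖ψ x t - ψ x s‖ ≤ M * |t - s| ^ α)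
    (hbilip : ∀ t ∈ Icc (0:ℝ) 1, ∀ s ∈ Icc (0:ℝ) 1,
      ∀ x₁ ∈ closedBall (0 : EuclideanSpace ℝ (Fin 3)) 1,
      ∀ x₂ ∈ closedBall (0 : EuclideanSpace ℝ (Fin 3)) 1,
        c * ‖x₁ - x₂‖ ≤ ‖(φ x₁ t - ψ x₁ s) - (φ x₂ t - ψ x₂ s)‖ ∧
        ‖(φ x₁ t - ψ x₁ s) - (φ x₂ t - ψ x₂ s)‖ ≤ L * ‖x₁ - x₂‖) :
    dimH {x | x ∈ closedBall (0 : EuclideanSpace ℝ (Fin 3)) 1 ∧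
        ((fun t => φ x t) '' Icc (0:ℝ) 1 ∩ (fun t => ψ x t) '' Icc (0:ℝ) 1).Nonempty} ≤
      2 / ENNReal.ofReal α :=
  stmt_5_general φ ψ α M c L hα0 hc hφHolder hψHolder hbilip
end
end

section
/- With the notation of the Collage setup (systems S, T of contractions with Lipschitz constants ≤ q < 1, index maps φ, ψ, invariant bounded set V containing the attractors, and ‖Tᵢ(x) − Sᵢ(x)‖ ≤ δ on V for all i): if for some finite multiindex j = j₁…jₖ there are constants δ₁, δ₂ with δ₁ ≤ ‖T_j(x) − S_j(x)‖ ≤ δ₂ for all x ∈ V, where T_j = T_{j₁}∘…∘T_{jₖ} and S_j likewise, and q_j = Lip(S_j), then for every code σ beginning with j₁…jₖ, δ₁ − q_j·δ/(1−q) ≤ ‖ψ(σ) − φ(σ)‖ ≤ δ₂ + q_j·δ/(1−q). -/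
open Set Metric

noncomputable section

private lemma iterate_code {α X : Type*} (f : α → X → X)
    (φ : (ℕ → α) → X) (hφ : ∀ σ, φ σ = f (σ 0) (φ (fun k => σ (k + 1))))
    (js : List α) : ∀ (σ : ℕ → α), (∀ i : Fin js.length, σ i = js.get i) →
    φ σ = ((js.map f).foldr (· ∘ ·) id) (φ (fun t => σ (t + js.length))) := by
  induction js with
  | nil => intro σ _; simp
  | cons j rest ih =>
    intro σ hσ
    have h0 : σ 0 = j := hσ ⟨0, by simp⟩
    have h1 : ∀ i : Fin rest.length, (fun k => σ (k + 1)) i = rest.get i := by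
      intro i
      have := hσ ⟨i + 1, by simp [i.2]⟩
      simpa using this
    have h2 := ih (fun k => σ (k + 1)) h1
    simp only [List.map_cons, List.foldr_cons, Function.comp_apply]
    rw [hφ σ, h0, h2]
    congr 2

theorem stmt_7 (n m : ℕ) (hm : 0 < m)
    (S T : Fin m → EuclideanSpace ℝ (Fin n) → EuclideanSpace ℝ (Fin n))
    (q : NNReal) (hq : q < 1)
    (hS : ∀ i, LipschitzWith q (S i)) (hT : ∀ i, LipschitzWith q (T i))
    (K L : Set (EuclideanSpace ℝ (Fin n)))
    (hKc : IsCompact K) (hKne : K.Nonempty) (hK : K = ⋃ i, S i '' K)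
    (hLc : IsCompact L) (hLne : L.Nonempty) (hL : L = ⋃ i, T i '' L)
    (φ ψ : (ℕ → Fin m) → EuclideanSpace ℝ (Fin n))
    (hφK : ∀ σ, φ σ ∈ K) (hψL : ∀ σ, ψ σ ∈ L)
    (hφ : ∀ σ : ℕ → Fin m, φ σ = S (σ 0) (φ (fun k => σ (k + 1))))
    (hψ : ∀ σ : ℕ → Fin m, ψ σ = T (σ 0) (ψ (fun k => σ (k + 1))))
    (V : Set (EuclideanSpace ℝ (Fin n))) (hV : Bornology.IsBounded V)
    (hSV : ∀ i, S i '' V ⊆ V) (hTV : ∀ i, T i '' V ⊆ V)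
    (hKV : K ⊆ V) (hLV : L ⊆ V)
    (δ : ℝ) (hδ : ∀ i, ∀ x ∈ V, ‖T i x - S i x‖ ≤ δ)
    (js : List (Fin m)) (hjs : js ≠ [])
    (Sj Tj : EuclideanSpace ℝ (Fin n) → EuclideanSpace ℝ (Fin n))
    (hSj : Sj = (js.map S).foldr (· ∘ ·) id)
    (hTj : Tj = (js.map T).foldr (· ∘ ·) id)
    (qj : NNReal) (hqj : LipschitzWith qj Sj)
    (δ₁ δ₂ : ℝ) (hδ₁₂ : ∀ x ∈ V, δ₁ ≤ ‖Tj x - Sj x‖ ∧ ‖Tj x - Sj x‖ ≤ δ₂)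
    (σ : ℕ → Fin m) (hσ : ∀ i : Fin js.length, σ i = js.get i) :
    δ₁ - qj * δ / (1 - q) ≤ ‖ψ σ - φ σ‖ ∧ ‖ψ σ - φ σ‖ ≤ δ₂ + qj * δ / (1 - q) := by
  have hq1 : (0:ℝ) < 1 - q := by
    have : (q:ℝ) < 1 := hq
    linarith
  -- the supremum of ‖ψ τ - φ τ‖ over all codes
  set A : Set ℝ := Set.range (fun τ : ℕ → Fin m => ‖ψ τ - φ τ‖) with hA
  have hAne : A.Nonempty := ⟨_, ⟨fun _ => ⟨0, hm⟩, rfl⟩⟩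
  have hbdd : BddAbove A := by
    obtain ⟨C, hC⟩ := Metric.isBounded_iff.mp (hLc.isBounded.union hKc.isBounded)
    refine ⟨C, ?_⟩
    rintro x ⟨τ, rfl⟩
    have := hC (Or.inl (hψL τ)) (Or.inr (hφK τ))
    simpa [dist_eq_norm] using this
  set M : ℝ := sSup A with hM
  have hle : ∀ τ : ℕ → Fin m, ‖ψ τ - φ τ‖ ≤ M := fun τ => le_csSup hbdd ⟨τ, rfl⟩
  have hrec : M ≤ δ + q * M := by
    refine csSup_le hAne ?_
    rintro x ⟨τ, rfl⟩
    set τ' := fun k => τ (k + 1)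
    have hmem : ψ τ' ∈ V := hLV (hψL τ')
    calc ‖ψ τ - φ τ‖ = ‖(T (τ 0) (ψ τ') - S (τ 0) (ψ τ')) + (S (τ 0) (ψ τ') - S (τ 0) (φ τ'))‖ := by
          rw [hψ τ, hφ τ]; congr 1; abel
      _ ≤ ‖T (τ 0) (ψ τ') - S (τ 0) (ψ τ')‖ + ‖S (τ 0) (ψ τ') - S (τ 0) (φ τ')‖ := norm_add_le _ _
      _ ≤ δ + q * M := by
          refine add_le_add (hδ _ _ hmem) ?_
          have h1 : dist (S (τ 0) (ψ τ')) (S (τ 0) (φ τ')) ≤ q * dist (ψ τ') (φ τ') :=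
            (hS (τ 0)).dist_le_mul _ _
          rw [dist_eq_norm, dist_eq_norm] at h1
          exact h1.trans (mul_le_mul_of_nonneg_left (hle τ') q.2)
  have hMle : M ≤ δ / (1 - q) := by
    rw [le_div_iff₀ hq1]
    nlinarith [hrec]
  have hM0 : (0:ℝ) ≤ M := le_trans (norm_nonneg _) (hle (fun _ => ⟨0, hm⟩))
  -- decompose
  set σ' := fun t => σ (t + js.length) with hσ'
  have hφσ : φ σ = Sj (φ σ') := by rw [hSj]; exact iterate_code S φ hφ js σ hσ
  have hψσ : ψ σ = Tj (ψ σ') := by rw [hTj]; exact iterate_code T ψ hψ js σ hσ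
  have hmem : ψ σ' ∈ V := hLV (hψL σ')
  have hSjnorm : ‖Sj (ψ σ') - Sj (φ σ')‖ ≤ qj * δ / (1 - q) := by
    have h1 : dist (Sj (ψ σ')) (Sj (φ σ')) ≤ qj * dist (ψ σ') (φ σ') := hqj.dist_le_mul _ _
    rw [dist_eq_norm, dist_eq_norm] at h1
    have h2 : (qj:ℝ) * ‖ψ σ' - φ σ'‖ ≤ qj * (δ / (1 - q)) :=
      mul_le_mul_of_nonneg_left ((hle σ').trans hMle) qj.2
    calc ‖Sj (ψ σ') - Sj (φ σ')‖ ≤ qj * (δ / (1 - q)) := h1.trans h2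
      _ = qj * δ / (1 - q) := by ring
  have hTS := hδ₁₂ (ψ σ') hmem
  have hdecomp : ψ σ - φ σ = (Tj (ψ σ') - Sj (ψ σ')) + (Sj (ψ σ') - Sj (φ σ')) := by
    rw [hφσ, hψσ]; abel
  constructor
  · have h3 : ‖Tj (ψ σ') - Sj (ψ σ')‖ ≤ ‖ψ σ - φ σ‖ + ‖Sj (ψ σ') - Sj (φ σ')‖ := by
      have : Tj (ψ σ') - Sj (ψ σ') = (ψ σ - φ σ) - (Sj (ψ σ') - Sj (φ σ')) := by
        rw [hdecomp]; abel
      rw [this]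
      exact norm_sub_le _ _
    linarith [hTS.1]
  · have h4 : ‖ψ σ - φ σ‖ ≤ ‖Tj (ψ σ') - Sj (ψ σ')‖ + ‖Sj (ψ σ') - Sj (φ σ')‖ := by
      rw [hdecomp]; exact norm_add_le _ _
    linarith [hTS.2]

end
end

section
/- Let u, v ∈ ℂ with Im(u/v) ≠ 0, and let α, β ∈ ℝ be the unique reals with αu + βv = 1. Set ξ = e^{2πiu} and η = e^{2πiv}. Then the multiplicative subgroup G = ⟨ξ, η⟩ of ℂ* is dense in ℂ (equivalently, its closure contains all of ℂ, 0 being a limit point) if and only if for all integers k, l, m, the equation kα + lβ + m = 0 implies k = l = m = 0. -/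
/-!
Pulling back along `z ↦ exp (2πiz)`, an open continuous map with dense range, `G` is dense iff
`ℤu + ℤv + ℤ` is dense in `ℂ`. In the real coordinates of the basis `(u, v)` this group is
`ℤ(α, β) + ℤ²`, because `αu + βv = 1`, so the theorem is Kronecker's theorem in the plane.

A relation `kα + lβ + m = 0` with `(k, l) ≠ 0` traps `ℤ(α, β) + ℤ²` in the closed family of
lines `kx + ly ∈ ℤ`. Conversely, the points `n(α, β)` reduced mod `ℤ²` are pairwise distinct in a
compact square, so the closure `H` of the group has nonzero elements arbitrarily close to `0`;
rescaling them by integers shows that `H` contains a whole line `ℝw`. Then `H` is the preimage of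
a closed subgroup of `ℝ` under the projection with kernel `ℝw`, and by independence that subgroup
is not cyclic, hence all of `ℝ`.
-/

open Filter Topology
open scoped Real

theorem exists_forall_smul_mem_of_zero_mem_closure {E : Type*} [NormedAddCommGroup E]
    [NormedSpace ℝ E] [ProperSpace E] {H : AddSubgroup E} (hH : IsClosed (H : Set E))
    (hacc : (0 : E) ∈ closure ((H : Set E) \ {0})) :
    ∃ w ≠ 0, ∀ t : ℝ, t • w ∈ H := by
  obtain ⟨h, hmem, hlim⟩ := mem_closure_iff_seq_limit.mp hacc
  have hne (n : ℕ) : ‖h n‖ ≠ 0 := norm_ne_zero_iff.mpr (hmem n).2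
  obtain ⟨w, hw, φ, hφ, hdir⟩ := (isCompact_sphere (0 : E) 1).tendsto_subseq
    (x := fun n ↦ ‖h n‖⁻¹ • h n) fun n ↦ by simp [norm_smul, hne n]
  refine ⟨w, ne_zero_of_mem_unit_sphere ⟨w, hw⟩, fun t ↦ ?_⟩
  have herr : Tendsto (fun n ↦ (⌊t / ‖h n‖⌋ : ℝ) • h n - t • (‖h n‖⁻¹ • h n)) atTop (𝓝 0) := by
    refine squeeze_zero_norm (fun n ↦ ?_) (tendsto_norm_zero.comp hlim)
    rw [smul_smul, ← sub_smul, norm_smul, ← div_eq_mul_inv, Real.norm_eq_abs,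
      abs_sub_comm, abs_of_nonneg (Int.fract_nonneg _)]
    exact mul_le_of_le_one_left (norm_nonneg _) (Int.fract_lt_one _).le
  refine hH.mem_of_tendsto (b := atTop) (f := fun n ↦ ⌊t / ‖h (φ n)‖⌋ • h (φ n)) ?_
    (Eventually.of_forall fun n ↦ H.zsmul_mem (hmem _).1 _)
  simpa [Int.cast_smul_eq_zsmul] using (herr.comp hφ.tendsto_atTop).add (hdir.const_smul t)

def kroneckerSubgroup (α β : ℝ) : AddSubgroup (ℝ × ℝ) where
  carrier := {p | ∃ k n m : ℤ, p = (n + k * α, m + k * β)}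
  zero_mem' := ⟨0, 0, 0, by ext <;> simp⟩
  add_mem' := by
    rintro _ _ ⟨k, n, m, rfl⟩ ⟨k', n', m', rfl⟩
    exact ⟨k + k', n + n', m + m', by ext <;> simp only [Prod.mk_add_mk, Int.cast_add] <;> ring⟩
  neg_mem' := by
    rintro _ ⟨k, n, m, rfl⟩
    exact ⟨-k, -n, -m, by ext <;> simp only [Prod.neg_mk, Int.cast_neg] <;> ring⟩

section Kronecker

variable {α β : ℝ}

theorem mk_mem_kroneckerSubgroup (k n m : ℤ) :
    ((n + k * α, m + k * β) : ℝ × ℝ) ∈ kroneckerSubgroup α β :=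
  ⟨k, n, m, rfl⟩

theorem zero_mem_closure_kroneckerSubgroup_diff (hα : Irrational α) :
    (0 : ℝ × ℝ) ∈ closure ((kroneckerSubgroup α β : Set (ℝ × ℝ)) \ {0}) := by
  set p : ℕ → ℝ × ℝ := fun n ↦ (Int.fract (n * α), Int.fract (n * β))
  have hpS (n : ℕ) : p n ∈ kroneckerSubgroup α β := by
    simpa [p, Int.fract, sub_eq_neg_add] using
      mk_mem_kroneckerSubgroup (α := α) (β := β) n (-⌊n * α⌋) (-⌊n * β⌋)
  have hp : Function.Injective p := fun n n' hnn' ↦ by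
    by_contra hne
    obtain ⟨z, hz⟩ := Int.fract_eq_fract.mp (congrArg Prod.fst hnn')
    refine (hα.intCast_mul (m := n - n') (by omega)).ne_int z ?_
    push_cast
    linear_combination hz
  obtain ⟨x, -, φ, hφ, hconv⟩ := (isCompact_Icc (a := (0 : ℝ × ℝ)) (b := 1)).tendsto_subseq
    (x := p) fun n ↦ ⟨⟨Int.fract_nonneg _, Int.fract_nonneg _⟩,
      ⟨(Int.fract_lt_one _).le, (Int.fract_lt_one _).le⟩⟩
  refine mem_closure_of_tendsto (f := fun n ↦ p (φ (n + 1)) - p (φ n)) (b := atTop) ?_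
    (Eventually.of_forall fun n ↦ ⟨sub_mem (hpS _) (hpS _), ?_⟩)
  · simpa using (hconv.comp (tendsto_add_atTop_nat 1)).sub hconv
  · exact sub_ne_zero.mpr (hp.ne (hφ.injective.ne n.succ_ne_self))

theorem eq_top_of_forall_smul_mem {H : AddSubgroup (ℝ × ℝ)} (hH : IsClosed (H : Set (ℝ × ℝ)))
    (h₁ : ((1, 0) : ℝ × ℝ) ∈ H) (h₂ : ((0, 1) : ℝ × ℝ) ∈ H) (hαβ : ((α, β) : ℝ × ℝ) ∈ H)
    (hind : ∀ k l m : ℤ, (k : ℝ) * α + l * β + m = 0 → k = 0 ∧ l = 0 ∧ m = 0)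
    {w : ℝ × ℝ} (hw : w ≠ 0) (hline : ∀ t : ℝ, t • w ∈ H) : H = ⊤ := by
  obtain ⟨a, b⟩ := w
  have hN : a ^ 2 + b ^ 2 ≠ 0 := by
    have : a ≠ 0 ∨ b ≠ 0 := by contrapose! hw; simp [hw]
    rcases this with h | h <;> positivity
  set P : AddSubgroup ℝ := H.comap (ContinuousLinearMap.toSpanSingleton ℝ (b, -a) : ℝ →+ ℝ × ℝ)
  have hP : IsClosed (P : Set ℝ) := hH.preimage (ContinuousLinearMap.toSpanSingleton ℝ _).continuous
  have hmem (q : ℝ × ℝ) : q ∈ H ↔ (b * q.1 - a * q.2) / (a ^ 2 + b ^ 2) ∈ P := by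
    -- coordinates of `q` in the orthogonal basis `(b, -a), (a, b)`
    have hq : q = ((b * q.1 - a * q.2) / (a ^ 2 + b ^ 2)) • (b, -a) +
        ((a * q.1 + b * q.2) / (a ^ 2 + b ^ 2)) • (a, b) := by
      ext <;> simp only [Prod.smul_mk, smul_eq_mul, Prod.mk_add_mk] <;> field_simp <;> ring
    conv_lhs => rw [hq]
    exact H.add_mem_cancel_right (hline _)
  rcases P.dense_or_cyclic with hdense | ⟨c, hc⟩
  · exact eq_top_iff.mpr fun q _ ↦ (hmem q).mpr (by simpa [hP.closure_eq] using hdense _)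
  · exfalso
    simp only [hmem, hc, AddSubgroup.mem_closure_singleton, zsmul_eq_mul] at h₁ h₂ hαβ
    obtain ⟨i, hi⟩ := h₁
    obtain ⟨j, hj⟩ := h₂
    obtain ⟨k, hk⟩ := hαβ
    have hrel : c * (i * α + j * β + (-k : ℤ)) = 0 := by
      push_cast; linear_combination α * hi + β * hj - hk
    have hij : (i : ℝ) * c = 0 ∧ (j : ℝ) * c = 0 := by
      rcases mul_eq_zero.mp hrel with hc0 | hrel
      · simp [hc0]
      · obtain ⟨rfl, rfl, -⟩ := hind i j (-k) hrel
        simp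
    rw [hij.1, eq_comm, div_eq_zero_iff, or_iff_left hN] at hi
    rw [hij.2, eq_comm, div_eq_zero_iff, or_iff_left hN] at hj
    exact hw (Prod.ext (by simpa using hj) (by simpa using hi))

theorem dense_kroneckerSubgroup
    (hind : ∀ k l m : ℤ, (k : ℝ) * α + l * β + m = 0 → k = 0 ∧ l = 0 ∧ m = 0) :
    Dense (kroneckerSubgroup α β : Set (ℝ × ℝ)) := by
  set H := (kroneckerSubgroup α β).topologicalClosure
  have hSH : kroneckerSubgroup α β ≤ H := AddSubgroup.le_topologicalClosure _
  have hH : IsClosed (H : Set (ℝ × ℝ)) := AddSubgroup.isClosed_topologicalClosure _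
  have hα : Irrational α := (irrational_iff_ne_rational α).mpr fun a b hb h ↦
    hb (hind b 0 (-a) (by rw [h]; push_cast; field_simp; ring)).1
  have hacc : (0 : ℝ × ℝ) ∈ closure ((H : Set (ℝ × ℝ)) \ {0}) :=
    closure_mono (Set.sdiff_subset_sdiff_left hSH) (zero_mem_closure_kroneckerSubgroup_diff hα)
  obtain ⟨w, hw, hline⟩ := exists_forall_smul_mem_of_zero_mem_closure hH hacc
  have htop : H = ⊤ := eq_top_of_forall_smul_mem hH
    (hSH (by simpa using mk_mem_kroneckerSubgroup (α := α) (β := β) 0 1 0))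
    (hSH (by simpa using mk_mem_kroneckerSubgroup (α := α) (β := β) 0 0 1))
    (hSH (by simpa using mk_mem_kroneckerSubgroup (α := α) (β := β) 1 0 0)) hind hw hline
  rw [dense_iff_closure_eq, ← AddSubgroup.topologicalClosure_coe]
  exact (congrArg SetLike.coe htop).trans AddSubgroup.coe_top

theorem eq_zero_of_dense_kroneckerSubgroup (hd : Dense (kroneckerSubgroup α β : Set (ℝ × ℝ)))
    {k l m : ℤ} (hrel : (k : ℝ) * α + l * β + m = 0) : k = 0 ∧ l = 0 ∧ m = 0 := by
  suffices hkl : k = 0 ∧ l = 0 by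
    obtain ⟨rfl, rfl⟩ := hkl
    exact ⟨rfl, rfl, by exact_mod_cast (by simpa using hrel)⟩
  set φ : ℝ × ℝ → ℝ := fun p ↦ k * p.1 + l * p.2
  have hsub : (kroneckerSubgroup α β : Set (ℝ × ℝ)) ⊆ φ ⁻¹' Set.range ((↑) : ℤ → ℝ) := by
    rintro _ ⟨k', n, m', rfl⟩
    refine ⟨k * n + l * m' - k' * m, ?_⟩
    simp only [φ]
    push_cast
    linear_combination (-k' : ℝ) * hrel
  have hclosed : IsClosed (φ ⁻¹' Set.range ((↑) : ℤ → ℝ)) :=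
    Int.isClosedEmbedding_coe_real.isClosed_range.preimage (by fun_prop)
  by_contra hkl
  have hN : (k : ℝ) ^ 2 + l ^ 2 ≠ 0 := by
    rcases not_and_or.mp hkl with h | h
    · have : (k : ℝ) ≠ 0 := by exact_mod_cast h
      positivity
    · have : (l : ℝ) ≠ 0 := by exact_mod_cast h
      positivity
  obtain ⟨j, hj⟩ := hclosed.closure_subset_iff.mpr hsub
    (hd ((2 * ((k : ℝ) ^ 2 + (l : ℝ) ^ 2))⁻¹ • ((k : ℝ), (l : ℝ))))
  have h2j : (2 : ℝ) * j = 1 := by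
    simp only [φ, Prod.smul_mk, smul_eq_mul] at hj
    field_simp at hj
    linear_combination hj
  have : 2 * j = 1 := by exact_mod_cast h2j
  omega

theorem dense_kroneckerSubgroup_iff :
    Dense (kroneckerSubgroup α β : Set (ℝ × ℝ)) ↔
      ∀ k l m : ℤ, (k : ℝ) * α + l * β + m = 0 → k = 0 ∧ l = 0 ∧ m = 0 :=
  ⟨fun hd _ _ _ ↦ eq_zero_of_dense_kroneckerSubgroup hd, dense_kroneckerSubgroup⟩

end Kronecker

theorem dense_preimage_iff_of_isOpenMap {X Y : Type*} [TopologicalSpace X] [TopologicalSpace Y]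
    {f : X → Y} (hf : IsOpenMap f) (hc : Continuous f) (hd : DenseRange f) {s : Set Y} :
    Dense (f ⁻¹' s) ↔ Dense s :=
  ⟨fun h ↦ (hd.dense_image hc h).mono (Set.image_preimage_subset f s), fun h ↦ h.preimage hf⟩

namespace Complex

theorem dense_preimage_exp_const_mul_iff {c : ℂ} (hc : c ≠ 0) {s : Set ℂ} :
    Dense ((fun z ↦ exp (c * z)) ⁻¹' s) ↔ Dense s := by
  have hexp : DenseRange exp := by
    rw [DenseRange, range_exp]
    exact dense_compl_singleton 0
  exact dense_preimage_iff_of_isOpenMap (isOpenMap_exp.comp (Homeomorph.mulLeft₀ c hc).isOpenMap)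
    (by fun_prop) (hexp.comp (mul_left_surjective₀ hc).denseRange continuous_exp)

theorem preimage_exp_two_pi_I_mul_setOf_zpow_mul_zpow (u v : ℂ) :
    (fun z ↦ exp (2 * π * I * z)) ⁻¹'
        {z | ∃ n m : ℤ, z = exp (2 * π * I * u) ^ n * exp (2 * π * I * v) ^ m} =
      {z | ∃ n m k : ℤ, z = n * u + m * v + k} := by
  ext z
  refine exists_congr fun n ↦ exists_congr fun m ↦ ?_
  rw [← exp_int_mul, ← exp_int_mul, ← exp_add, exp_eq_exp_iff_exists_int]
  refine exists_congr fun k ↦ ⟨fun h ↦ mul_left_cancel₀ two_pi_I_ne_zero ?_, fun h ↦ ?_⟩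
  · linear_combination h
  · rw [h]; ring

theorem eq_zero_of_ofReal_mul_add_ofReal_mul_eq_zero {u v : ℂ} (huv : (u / v).im ≠ 0)
    {x y : ℝ} (h : x * u + y * v = 0) : x = 0 ∧ y = 0 := by
  have hv : v ≠ 0 := by rintro rfl; simp at huv
  have h' : (x : ℂ) * (u / v) + y = 0 := by
    field_simp
    linear_combination h
  have hx : x = 0 := by simpa [huv] using congrArg im h'
  refine ⟨hx, ?_⟩
  simpa [hx] using congrArg re h'

noncomputable def smulAddSmulEquiv (u v : ℂ) (huv : (u / v).im ≠ 0) : (ℝ × ℝ) ≃L[ℝ] ℂ :=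
  LinearEquiv.toContinuousLinearEquiv <|
    ((LinearMap.fst ℝ ℝ ℝ).smulRight u + (LinearMap.snd ℝ ℝ ℝ).smulRight v).linearEquivOfInjective
      ((injective_iff_map_eq_zero _).mpr fun p hp ↦ Prod.ext_iff.mpr <|
        eq_zero_of_ofReal_mul_add_ofReal_mul_eq_zero huv (by simpa [real_smul] using hp))
      (by simp [finrank_real_complex])

theorem smulAddSmulEquiv_apply {u v : ℂ} (huv : (u / v).im ≠ 0) (p : ℝ × ℝ) :
    smulAddSmulEquiv u v huv p = p.1 * u + p.2 * v := by
  simp [smulAddSmulEquiv, real_smul]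

theorem smulAddSmulEquiv_image_kroneckerSubgroup {u v : ℂ} (huv : (u / v).im ≠ 0) {α β : ℝ}
    (hαβ : (α : ℂ) * u + β * v = 1) :
    smulAddSmulEquiv u v huv '' kroneckerSubgroup α β =
      {z | ∃ n m k : ℤ, z = n * u + m * v + k} := by
  ext z
  constructor
  · rintro ⟨_, ⟨k, n, m, rfl⟩, rfl⟩
    exact ⟨n, m, k, by rw [smulAddSmulEquiv_apply]; push_cast; linear_combination k * hαβ⟩
  · rintro ⟨n, m, k, rfl⟩
    exact ⟨_, mk_mem_kroneckerSubgroup k n m, by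
      rw [smulAddSmulEquiv_apply]; push_cast; linear_combination k * hαβ⟩

end Complex

open Complex

noncomputable section

theorem stmt_10 (u v : ℂ) (huv : (u / v).im ≠ 0)
    (α β : ℝ) (hαβ : (α : ℂ) * u + (β : ℂ) * v = 1)
    (ξ η : ℂ) (hξ : ξ = Complex.exp (2 * Real.pi * Complex.I * u))
    (hη : η = Complex.exp (2 * Real.pi * Complex.I * v)) :
    Dense {z : ℂ | ∃ n m : ℤ, z = ξ ^ n * η ^ m} ↔
      ∀ k l m : ℤ, (k : ℝ) * α + (l : ℝ) * β + (m : ℝ) = 0 → k = 0 ∧ l = 0 ∧ m = 0 := by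
  subst hξ hη
  rw [← dense_preimage_exp_const_mul_iff two_pi_I_ne_zero,
    preimage_exp_two_pi_I_mul_setOf_zpow_mul_zpow,
    ← smulAddSmulEquiv_image_kroneckerSubgroup huv hαβ, ← ContinuousLinearEquiv.coe_toHomeomorph,
    (smulAddSmulEquiv u v huv).toHomeomorph.isDenseEmbedding.dense_image,
    dense_kroneckerSubgroup_iff]

end
end

section
/- If ξ, η ∈ ℂ* generate a dense subgroup of ℂ* of the second type (i.e. H_G = S¹), then for any nonzero rational exponents p = a/b, q = c/d with a,b,c,d positive integers, appropriate roots ξ^{p} and η^{q} (any fixed choice of b-th and d-th roots) also generate a dense subgroup of the second type. Consequently, the set of pairs (ξ, η) ∈ ℂ² generating a dense subgroup of the second type is dense in ℂ². -/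
open Complex Metric

noncomputable section

/-- `ξ, η` generate a dense subgroup of `ℂ*`. -/
def DensePair (ξ η : ℂ) : Prop :=
  Dense {z : ℂ | ∃ n m : ℤ, z = ξ ^ n * η ^ m}

/-- `H_G = S¹`: every point of the unit circle is a limit of `(ξ/|ξ|)^{n_k}` along
integer sequences `(n_k, m_k)` with `ξ^{n_k} η^{m_k} → 1`. -/
def SecondType (ξ η : ℂ) : Prop :=
  ∀ z : ℂ, ‖z‖ = 1 → ∀ ε : ℝ, 0 < ε →
    ∃ n m : ℤ, ‖ξ ^ n * η ^ m - 1‖ < ε ∧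
      ‖(ξ / (‖ξ‖ : ℂ)) ^ n - z‖ < ε


/-!
Raising to the power `K = a c` maps `ξ ^ n η ^ m` to `ξ' ^ (b c n) η' ^ (d a m)` and
`(ξ / |ξ|) ^ n` to `(ξ' / |ξ'|) ^ (b c n)`. As `z ↦ z ^ K` is continuous and maps `ℂ` onto `ℂ`
and the unit circle onto itself, both density and `H_G = S¹` pass from `(ξ, η)` to `(ξ', η')`.

For the density statement: `|ξ| ≠ 1`, since otherwise the moduli of the group are the
powers of `|η|`, which miss an interval `(1, t)`. Hence `log ξ` and `2πi` are `ℝ`-independent,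
the points `(n log ξ + 2πik) / b` are dense in `ℂ`, and their exponentials, which are `b`-th
roots of `ξ ^ n`, are dense in `ℂ`. A negative `n` is handled by passing to `ξ⁻¹`, which
preserves both properties.
-/

open scoped Real

theorem zpow_eq_pow_natAbs_or_inv_pow_natAbs {α : Type*} [DivisionMonoid α] (x : α) (n : ℤ) :
    x ^ n = x ^ n.natAbs ∨ x ^ n = x⁻¹ ^ n.natAbs := by
  rcases Int.natAbs_eq n with h | h
  · left; nth_rewrite 1 [h]; exact zpow_natCast x _
  · right; nth_rewrite 1 [h]; rw [zpow_neg, zpow_natCast, inv_pow]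

theorem zpow_pow_eq_of_pow_eq {α : Type*} [DivisionMonoid α] {x y : α} {a b : ℕ}
    (h : y ^ b = x ^ a) (c : ℕ) (n : ℤ) :
    (x ^ n) ^ (a * c) = y ^ (((b * c : ℕ) : ℤ) * n) := by
  rw [zpow_mul, zpow_natCast, pow_mul y, h, ← pow_mul, ← zpow_natCast (x ^ n),
    ← zpow_natCast x (a * c), ← zpow_mul, ← zpow_mul, mul_comm]

theorem mul_zpow_pow_eq_of_pow_eq {α : Type*} [DivisionCommMonoid α] {ξ η ξ' η' : α}
    {a b c d : ℕ} (hξ' : ξ' ^ b = ξ ^ a) (hη' : η' ^ d = η ^ c) (n m : ℤ) :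
    (ξ ^ n * η ^ m) ^ (a * c) = ξ' ^ (((b * c : ℕ) : ℤ) * n) * η' ^ (((d * a : ℕ) : ℤ) * m) := by
  rw [mul_pow, zpow_pow_eq_of_pow_eq hξ', mul_comm a c, zpow_pow_eq_of_pow_eq hη']

theorem Complex.exists_norm_eq_one_pow_eq {z : ℂ} (hz : ‖z‖ = 1) {K : ℕ} (hK : 0 < K) :
    ∃ w : ℂ, ‖w‖ = 1 ∧ w ^ K = z := by
  obtain ⟨w, rfl⟩ := IsAlgClosed.exists_pow_nat_eq z hK
  refine ⟨w, ?_, rfl⟩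
  rwa [norm_pow, pow_eq_one_iff_of_nonneg (norm_nonneg w) hK.ne'] at hz

section Pairs

variable {ξ η ξ' η' : ℂ}

theorem DensePair.symm (h : DensePair ξ η) : DensePair η ξ :=
  h.mono <| by rintro _ ⟨n, m, rfl⟩; exact ⟨m, n, mul_comm _ _⟩

theorem DensePair.inv_left (h : DensePair ξ η) : DensePair ξ⁻¹ η :=
  h.mono <| by rintro _ ⟨n, m, rfl⟩; exact ⟨-n, m, by rw [inv_zpow', neg_neg]⟩

theorem DensePair.inv_right (h : DensePair ξ η) : DensePair ξ η⁻¹ :=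
  h.mono <| by rintro _ ⟨n, m, rfl⟩; exact ⟨n, -m, by rw [inv_zpow', neg_neg]⟩

theorem SecondType.inv_left (h : SecondType ξ η) : SecondType ξ⁻¹ η := by
  intro z hz ε hε
  obtain ⟨n, m, h₁, h₂⟩ := h z hz ε hε
  have hunit : ξ⁻¹ / (‖ξ⁻¹‖ : ℂ) = (ξ / (‖ξ‖ : ℂ))⁻¹ := by
    rw [norm_inv, ofReal_inv, inv_div, div_eq_mul_inv, div_eq_mul_inv, inv_inv, mul_comm]
  refine ⟨-n, m, ?_, ?_⟩
  · rwa [inv_zpow', neg_neg]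
  · rwa [hunit, inv_zpow', neg_neg]

theorem SecondType.inv_right (h : SecondType ξ η) : SecondType ξ η⁻¹ := by
  intro z hz ε hε
  obtain ⟨n, m, h₁, h₂⟩ := h z hz ε hε
  exact ⟨n, -m, by rwa [inv_zpow', neg_neg], h₂⟩

theorem DensePair.of_pow {a b c d : ℕ} (h : DensePair ξ η) (ha : 0 < a) (hc : 0 < c)
    (hξ' : ξ' ^ b = ξ ^ a) (hη' : η' ^ d = η ^ c) : DensePair ξ' η' := by
  have hsurj : Function.Surjective fun z : ℂ => z ^ (a * c) :=
    fun z => IsAlgClosed.exists_pow_nat_eq z (Nat.mul_pos ha hc)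
  refine (hsurj.denseRange.dense_image (continuous_pow _) h).mono ?_
  rintro _ ⟨_, ⟨n, m, rfl⟩, rfl⟩
  exact ⟨_, _, mul_zpow_pow_eq_of_pow_eq hξ' hη' n m⟩

/-- `H_G` is the fibre over `1` of the closure of this set. -/
def angularOrbit (ξ η : ℂ) : Set (ℂ × ℂ) :=
  {p | ∃ n m : ℤ, p = (ξ ^ n * η ^ m, (ξ / (‖ξ‖ : ℂ)) ^ n)}

theorem secondType_iff_mem_closure :
    SecondType ξ η ↔ ∀ z : ℂ, ‖z‖ = 1 → ((1 : ℂ), z) ∈ closure (angularOrbit ξ η) := by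
  simp only [SecondType, Metric.mem_closure_iff, angularOrbit, Prod.dist_eq, max_lt_iff,
    Complex.dist_eq]
  refine forall₂_congr fun z _ => forall₂_congr fun ε _ => ⟨?_, ?_⟩
  · rintro ⟨n, m, h⟩; exact ⟨_, ⟨n, m, rfl⟩, by rwa [norm_sub_rev 1, norm_sub_rev z]⟩
  · rintro ⟨_, ⟨n, m, rfl⟩, h⟩; exact ⟨n, m, by rwa [norm_sub_rev 1, norm_sub_rev z] at h⟩

theorem SecondType.of_pow {a b c d : ℕ} (h : SecondType ξ η) (ha : 0 < a) (hc : 0 < c)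
    (hξ' : ξ' ^ b = ξ ^ a) (hη' : η' ^ d = η ^ c) : SecondType ξ' η' := by
  rw [secondType_iff_mem_closure] at h ⊢
  intro z hz
  obtain ⟨w, hw, rfl⟩ := Complex.exists_norm_eq_one_pow_eq hz (Nat.mul_pos ha hc)
  set f : ℂ × ℂ → ℂ × ℂ := fun p => (p.1 ^ (a * c), p.2 ^ (a * c))
  have hunit : (ξ' / (‖ξ'‖ : ℂ)) ^ b = (ξ / (‖ξ‖ : ℂ)) ^ a := by
    rw [div_pow, div_pow, hξ', ← ofReal_pow, ← ofReal_pow, ← norm_pow, ← norm_pow, hξ']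
  have hmaps : f '' angularOrbit ξ η ⊆ angularOrbit ξ' η' := by
    rintro _ ⟨_, ⟨n, m, rfl⟩, rfl⟩
    exact ⟨_, _, Prod.ext (mul_zpow_pow_eq_of_pow_eq hξ' hη' n m)
      (zpow_pow_eq_of_pow_eq hunit c n)⟩
  have hf : Continuous f := by fun_prop
  simpa [f] using closure_mono hmaps (image_closure_subset_closure_image hf ⟨_, h w hw, rfl⟩)

theorem densePair_and_secondType_of_zpow {a c : ℤ} {b d : ℕ} (hdense : DensePair ξ η)
    (hsecond : SecondType ξ η) (ha : a ≠ 0) (hc : c ≠ 0)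
    (hξ' : ξ' ^ b = ξ ^ a) (hη' : η' ^ d = η ^ c) : DensePair ξ' η' ∧ SecondType ξ' η' := by
  have of_pow : ∀ ξ₀ η₀ : ℂ, DensePair ξ₀ η₀ → SecondType ξ₀ η₀ →
      ξ' ^ b = ξ₀ ^ a.natAbs → η' ^ d = η₀ ^ c.natAbs → DensePair ξ' η' ∧ SecondType ξ' η' :=
    fun _ _ hd hs h₁ h₂ => ⟨hd.of_pow (Int.natAbs_pos.2 ha) (Int.natAbs_pos.2 hc) h₁ h₂,
      hs.of_pow (Int.natAbs_pos.2 ha) (Int.natAbs_pos.2 hc) h₁ h₂⟩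
  rcases zpow_eq_pow_natAbs_or_inv_pow_natAbs ξ a with e₁ | e₁ <;>
    rcases zpow_eq_pow_natAbs_or_inv_pow_natAbs η c with e₂ | e₂ <;>
    rw [e₁] at hξ' <;> rw [e₂] at hη'
  · exact of_pow _ _ hdense hsecond hξ' hη'
  · exact of_pow _ _ hdense.inv_right hsecond.inv_right hξ' hη'
  · exact of_pow _ _ hdense.inv_left hsecond.inv_left hξ' hη'
  · exact of_pow _ _ hdense.inv_left.inv_right hsecond.inv_left.inv_right hξ' hη'

end Pairs

theorem exists_zpow_gap {r : ℝ} (hr : 0 ≤ r) : ∃ t > 1, ∀ m : ℤ, r ^ m ≤ 1 ∨ t ≤ r ^ m := by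
  have of_one_lt : ∀ s : ℝ, 1 < s → ∀ m : ℤ, s ^ m ≤ 1 ∨ s ≤ s ^ m := fun s hs m => by
    rcases le_or_gt m 0 with hm | hm
    · exact Or.inl (zpow_le_one_of_nonpos₀ hs.le hm)
    · exact Or.inr (by simpa using zpow_le_zpow_right₀ hs.le (show (1 : ℤ) ≤ m by omega))
  by_cases h₁ : 1 < r
  · exact ⟨r, h₁, of_one_lt r h₁⟩
  by_cases h₂ : 1 < r⁻¹
  · exact ⟨r⁻¹, h₂, fun m => by simpa [inv_zpow'] using of_one_lt r⁻¹ h₂ (-m)⟩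
  refine ⟨2, one_lt_two, fun m => Or.inl ?_⟩
  rcases zpow_eq_pow_natAbs_or_inv_pow_natAbs r m with e | e <;> rw [e]
  · exact pow_le_one₀ hr (not_lt.1 h₁)
  · exact pow_le_one₀ (inv_nonneg.2 hr) (not_lt.1 h₂)

theorem DensePair.norm_left_ne_one {ξ η : ℂ} (h : DensePair ξ η) : ‖ξ‖ ≠ 1 := by
  intro hξ
  obtain ⟨t, ht, hgap⟩ := exists_zpow_gap (norm_nonneg η)
  have hopen : IsOpen {z : ℂ | ‖z‖ ∈ Set.Ioo 1 t} := isOpen_Ioo.preimage continuous_norm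
  have hne : {z : ℂ | ‖z‖ ∈ Set.Ioo 1 t}.Nonempty :=
    ⟨((1 + t) / 2 : ℝ), show ‖(((1 + t) / 2 : ℝ) : ℂ)‖ ∈ Set.Ioo 1 t by
      rw [norm_real, Real.norm_of_nonneg (by linarith)]; constructor <;> linarith⟩
  obtain ⟨_, hmem, n, m, rfl⟩ := h.inter_open_nonempty _ hopen hne
  obtain ⟨h₁, h₂⟩ : ‖ξ ^ n * η ^ m‖ ∈ Set.Ioo 1 t := hmem
  rw [norm_mul, norm_zpow, norm_zpow, hξ, one_zpow, one_mul] at h₁ h₂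
  rcases hgap m with hm | hm <;> linarith

theorem exists_int_ne_zero_abs_sub_le_one (q : ℝ) : ∃ n : ℤ, n ≠ 0 ∧ |q - n| ≤ 1 := by
  by_cases h : ⌊q⌋ = 0
  · obtain ⟨h₀, h₁⟩ := Int.floor_eq_zero_iff.mp h
    exact ⟨1, one_ne_zero, abs_le.2 ⟨by push_cast; linarith, by push_cast; linarith⟩⟩
  · refine ⟨⌊q⌋, h, ?_⟩
    rw [abs_of_nonneg (sub_nonneg.2 (Int.floor_le q))]
    linarith [Int.lt_floor_add_one q]

theorem exists_lattice_point_near {L : ℂ} (hL : L.re ≠ 0) (u : ℂ) :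
    ∃ n k : ℤ, n ≠ 0 ∧ ‖u - (n * L + k * (2 * π * I))‖ ≤ |L.re| + π := by
  obtain ⟨n, hn, hq⟩ := exists_int_ne_zero_abs_sub_le_one (u.re / L.re)
  set y := u.im - n * L.im
  set k := round (y / (2 * π))
  refine ⟨n, k, hn, ?_⟩
  have hre : |u.re - n * L.re| ≤ |L.re| := by
    calc |u.re - n * L.re| = |L.re| * |u.re / L.re - n| := by
          rw [← abs_mul, mul_sub, mul_div_cancel₀ _ hL, mul_comm]
      _ ≤ |L.re| := by simpa using mul_le_mul_of_nonneg_left hq (abs_nonneg L.re)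
  have him : |y - k * (2 * π)| ≤ π := by
    calc |y - k * (2 * π)| = 2 * π * |y / (2 * π) - k| := by
          rw [← abs_of_pos Real.two_pi_pos, ← abs_mul, abs_of_pos Real.two_pi_pos, mul_sub,
            mul_div_cancel₀ _ Real.two_pi_pos.ne', mul_comm (2 * π)]
      _ ≤ 2 * π * (1 / 2) := by gcongr; exact abs_sub_round _
      _ = π := by ring
  calc ‖u - (n * L + k * (2 * π * I))‖
      ≤ |(u - (n * L + k * (2 * π * I))).re| + |(u - (n * L + k * (2 * π * I))).im| :=
        Complex.norm_le_abs_re_add_abs_im _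
    _ = |u.re - n * L.re| + |y - k * (2 * π)| := by simp [y]; ring_nf
    _ ≤ |L.re| + π := add_le_add hre him

theorem dense_lattice_div_nat {L : ℂ} (hL : L.re ≠ 0) :
    Dense {z : ℂ | ∃ (n k : ℤ) (b : ℕ), n ≠ 0 ∧ 0 < b ∧ z = (n * L + k * (2 * π * I)) / b} := by
  rw [Metric.dense_iff]
  intro t δ hδ
  obtain ⟨b, hb⟩ := exists_nat_gt ((|L.re| + π) / δ)
  have hb₀ : (0 : ℝ) < b := lt_of_le_of_lt (by positivity) hb
  obtain ⟨n, k, hn, hnk⟩ := exists_lattice_point_near hL (b * t)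
  refine ⟨_, ?_, n, k, b, hn, by exact_mod_cast hb₀, rfl⟩
  have hbC : (b : ℂ) ≠ 0 := by exact_mod_cast hb₀.ne'
  rw [mem_ball, dist_comm, Complex.dist_eq]
  calc ‖t - (n * L + k * (2 * π * I)) / b‖ = ‖b * t - (n * L + k * (2 * π * I))‖ / b := by
        rw [← Complex.norm_natCast b, ← norm_div, sub_div, mul_div_cancel_left₀ _ hbC]
    _ ≤ (|L.re| + π) / b := by gcongr
    _ < δ := by rwa [div_lt_iff₀ hb₀, mul_comm, ← div_lt_iff₀ hδ]

def rootsOfPowers (ξ : ℂ) : Set ℂ :=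
  {z | z ≠ 0 ∧ ∃ (n : ℤ) (b : ℕ), n ≠ 0 ∧ 0 < b ∧ z ^ b = ξ ^ n}

theorem dense_rootsOfPowers {ξ : ℂ} (hξ : ξ ≠ 0) (h : ‖ξ‖ ≠ 1) : Dense (rootsOfPowers ξ) := by
  have hL : (log ξ).re ≠ 0 := by
    rw [log_re]; exact Real.log_ne_zero_of_pos_of_ne_one (norm_pos_iff.2 hξ) h
  have hexp : DenseRange exp := by
    rw [DenseRange, range_exp]; exact dense_compl_singleton 0
  refine (hexp.dense_image continuous_exp (dense_lattice_div_nat hL)).mono ?_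
  rintro _ ⟨_, ⟨n, k, b, hn, hb, rfl⟩, rfl⟩
  refine ⟨exp_ne_zero _, n, b, hn, hb, ?_⟩
  rw [← exp_nat_mul, mul_div_cancel₀ _ (by exact_mod_cast hb.ne'), exp_add, exp_int_mul,
    exp_log hξ, exp_int_mul_two_pi_mul_I, mul_one]

theorem stmt_12 (ξ η : ℂ) (hξ : ξ ≠ 0) (hη : η ≠ 0)
    (hdense : DensePair ξ η) (hsecond : SecondType ξ η) :
    (∀ a b c d : ℕ, 0 < a → 0 < b → 0 < c → 0 < d →
      ∀ ξ' η' : ℂ, ξ' ^ b = ξ ^ a → η' ^ d = η ^ c →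
        DensePair ξ' η' ∧ SecondType ξ' η') ∧
    Dense {p : ℂ × ℂ | p.1 ≠ 0 ∧ p.2 ≠ 0 ∧ DensePair p.1 p.2 ∧ SecondType p.1 p.2} := by
  refine ⟨fun a b c d ha _ hc _ ξ' η' hξ' hη' =>
    ⟨hdense.of_pow ha hc hξ' hη', hsecond.of_pow ha hc hξ' hη'⟩, ?_⟩
  have hroots := (dense_rootsOfPowers hξ hdense.norm_left_ne_one).prod
    (dense_rootsOfPowers hη hdense.symm.norm_left_ne_one)
  refine hroots.mono ?_
  rintro ⟨ξ', η'⟩ ⟨⟨hξ'0, a, b, ha, -, hξ'⟩, ⟨hη'0, c, d, hc, -, hη'⟩⟩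
  exact ⟨hξ'0, hη'0, densePair_and_secondType_of_zpow hdense hsecond ha hc hξ' hη'⟩
end
end

section
/- Let G = ⟨ξ, η⟩ with ξ = re^{iα}, η = Re^{iβ} be a dense multiplicative subgroup of ℂ* of the second type. Then for any z₁, z₂ ∈ ℂ \ {0} there exists a sequence of integer pairs (n_k, m_k) such that z₁ξ^{n_k}/(z₂η^{m_k}) → 1, e^{i n_k α} → e^{−i arg(z₁)}, and e^{i m_k β} → e^{−i arg(z₂)} as k → ∞. -/
open Complex Filter

noncomputable section

/-!
Consider the subgroup `S = {(ξ^n η^m, (ξ/|ξ|)^n)}` of `ℂ* × S¹`. Being of the second type means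
that `{1} × S¹` lies in its closure; multiplying by elements of `S` and using the density of
`⟨ξ, η⟩` shows that all of `ℂ × S¹` does. So one can make `ξ^n η^m → z₂/z₁` while
`(ξ/|ξ|)^n → |z₁|/z₁ = e^{-i arg z₁}`, and taking `m_k = -M_k` the phase of `η^{m_k}` is then
forced: `(η/|η|)^{-M} = (ξ/|ξ|)^n · |ξ^n η^M| / (ξ^n η^M) → |z₂|/z₂ = e^{-i arg z₂}`.
-/

open Topology Set

section ZpowPhase

def zpowPhase (ξ η : ℂ) (p : ℤ × ℤ) : ℂ × ℂ :=
  (ξ ^ p.1 * η ^ p.2, (ξ / ‖ξ‖) ^ p.1)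

variable {ξ η : ℂ}

lemma zpowPhase_add (hξ : ξ ≠ 0) (hη : η ≠ 0) (p q : ℤ × ℤ) :
    zpowPhase ξ η (p + q) = zpowPhase ξ η p * zpowPhase ξ η q := by
  have hphase : ξ / ‖ξ‖ ≠ 0 := div_ne_zero hξ (by simpa using hξ)
  ext <;> simp only [zpowPhase, Prod.fst_add, Prod.snd_add, Prod.fst_mul, Prod.snd_mul,
    zpow_add₀ hξ, zpow_add₀ hη, zpow_add₀ hphase]
  ring

lemma mul_mem_closure_range_zpowPhase (hξ : ξ ≠ 0) (hη : η ≠ 0) (p : ℤ × ℤ) {x : ℂ × ℂ}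
    (hx : x ∈ closure (range (zpowPhase ξ η))) :
    zpowPhase ξ η p * x ∈ closure (range (zpowPhase ξ η)) :=
  map_mem_closure (continuous_const.mul continuous_id) hx <| by
    rintro _ ⟨q, rfl⟩
    exact ⟨p + q, zpowPhase_add hξ hη p q⟩

lemma one_mem_closure_range_zpowPhase (hsecond : SecondType ξ η) {z : ℂ} (hz : ‖z‖ = 1) :
    (1, z) ∈ closure (range (zpowPhase ξ η)) := by
  refine Metric.mem_closure_iff.mpr fun ε hε => ?_
  obtain ⟨n, m, h₁, h₂⟩ := hsecond z hz ε hε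
  refine ⟨zpowPhase ξ η (n, m), mem_range_self _, ?_⟩
  rw [Prod.dist_eq, max_lt_iff, dist_comm 1, dist_comm z]
  exact ⟨by simpa [zpowPhase, dist_eq] using h₁, by simpa [zpowPhase, dist_eq] using h₂⟩

lemma mem_closure_range_zpowPhase (hξ : ξ ≠ 0) (hη : η ≠ 0) (hdense : DensePair ξ η)
    (hsecond : SecondType ξ η) (c : ℂ) {u : ℂ} (hu : ‖u‖ = 1) :
    (c, u) ∈ closure (range (zpowPhase ξ η)) := by
  have hphase : ‖ξ / ‖ξ‖‖ = 1 := by simp [hξ]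
  have horbit : MapsTo (·, u) {z : ℂ | ∃ n m : ℤ, z = ξ ^ n * η ^ m}
      (closure (range (zpowPhase ξ η))) := by
    rintro _ ⟨n, m, rfl⟩
    have hw : ‖(ξ / ‖ξ‖) ^ n‖ = 1 := by rw [norm_zpow, hphase, one_zpow]
    have hw₀ : (ξ / ‖ξ‖) ^ n ≠ 0 := norm_ne_zero_iff.mp (by rw [hw]; exact one_ne_zero)
    have h := mul_mem_closure_range_zpowPhase hξ hη (n, m)
      (one_mem_closure_range_zpowPhase hsecond (z := u * ((ξ / ‖ξ‖) ^ n)⁻¹) (by simp [hu, hw]))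
    convert h using 1
    ext
    · simp [zpowPhase]
    · simp only [zpowPhase, Prod.snd_mul]
      field_simp
  simpa using map_mem_closure (Continuous.prodMk_left u) (hdense c) horbit

lemma exists_tendsto_zpow_mul_zpow (hξ : ξ ≠ 0) (hη : η ≠ 0) (hdense : DensePair ξ η)
    (hsecond : SecondType ξ η) (c : ℂ) {u : ℂ} (hu : ‖u‖ = 1) :
    ∃ n m : ℕ → ℤ, Tendsto (fun k => ξ ^ n k * η ^ m k) atTop (𝓝 c) ∧
      Tendsto (fun k => (ξ / ‖ξ‖) ^ n k) atTop (𝓝 u) := by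
  obtain ⟨x, hxS, hx⟩ := mem_closure_iff_seq_limit.mp
    (mem_closure_range_zpowPhase hξ hη hdense hsecond c hu)
  choose p hp using hxS
  rw [show x = _ from funext fun k => (hp k).symm] at hx
  exact ⟨fun k => (p k).1, fun k => (p k).2, hx.fst_nhds, hx.snd_nhds⟩

end ZpowPhase

lemma zpow_mul_zpow_div_norm {ξ η : ℂ} (hξ : ξ ≠ 0) (hη : η ≠ 0) (n m : ℤ) :
    ξ ^ n * η ^ m / ‖ξ ^ n * η ^ m‖ = (ξ / ‖ξ‖) ^ n * (η / ‖η‖) ^ m := by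
  have hξ' : (‖ξ‖ : ℂ) ≠ 0 := by simpa using hξ
  have hη' : (‖η‖ : ℂ) ≠ 0 := by simpa using hη
  rw [norm_mul, norm_zpow, norm_zpow, div_zpow, div_zpow]
  push_cast
  field_simp

lemma div_norm_zpow_neg_eq {ξ η : ℂ} (hξ : ξ ≠ 0) (hη : η ≠ 0) (n m : ℤ) :
    (η / ‖η‖) ^ (-m) = (ξ / ‖ξ‖) ^ n * (‖ξ ^ n * η ^ m‖ / (ξ ^ n * η ^ m)) := by
  have hphase : (ξ / ‖ξ‖) ^ n ≠ 0 := zpow_ne_zero _ (div_ne_zero hξ (by simpa using hξ))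
  rw [← inv_div (ξ ^ n * η ^ m), zpow_mul_zpow_div_norm hξ hη, zpow_neg, mul_inv, ← mul_assoc,
    mul_inv_cancel₀ hphase, one_mul]

lemma polar_div_norm_zpow {r : ℝ} (hr : 0 < r) (θ : ℝ) (n : ℤ) :
    (r * exp (θ * I) / ‖(r : ℂ) * exp (θ * I)‖) ^ n = exp (n * θ * I) := by
  have hr' : (r : ℂ) ≠ 0 := by exact_mod_cast hr.ne'
  rw [norm_mul, norm_exp_ofReal_mul_I, mul_one, norm_real, Real.norm_of_nonneg hr.le,
    mul_div_cancel_left₀ _ hr', mul_assoc, exp_int_mul]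

lemma exp_neg_arg_mul_I {z : ℂ} (hz : z ≠ 0) : exp (-arg z * I) = ‖z‖ / z := by
  rw [eq_div_iff hz, neg_mul, exp_neg, inv_mul_eq_iff_eq_mul₀ (exp_ne_zero _)]
  exact (norm_mul_exp_arg_mul_I z).symm.trans (mul_comm _ _)

theorem stmt_13 (r R α β : ℝ) (hr : 0 < r) (hR : 0 < R)
    (ξ η : ℂ) (hξ : ξ = r * Complex.exp (α * Complex.I))
    (hη : η = R * Complex.exp (β * Complex.I))
    (hdense : DensePair ξ η) (hsecond : SecondType ξ η)
    (z₁ z₂ : ℂ) (hz₁ : z₁ ≠ 0) (hz₂ : z₂ ≠ 0) :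
    ∃ n m : ℕ → ℤ,
      Tendsto (fun k => z₁ * ξ ^ n k / (z₂ * η ^ m k)) atTop (nhds 1) ∧
      Tendsto (fun k => Complex.exp ((n k : ℂ) * α * Complex.I)) atTop
        (nhds (Complex.exp (-(Complex.arg z₁) * Complex.I))) ∧
      Tendsto (fun k => Complex.exp ((m k : ℂ) * β * Complex.I)) atTop
        (nhds (Complex.exp (-(Complex.arg z₂) * Complex.I))) := by
  have hξ₀ : ξ ≠ 0 := by rw [hξ]; exact mul_ne_zero (by exact_mod_cast hr.ne') (exp_ne_zero _)
  have hη₀ : η ≠ 0 := by rw [hη]; exact mul_ne_zero (by exact_mod_cast hR.ne') (exp_ne_zero _)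
  have hc : z₂ / z₁ ≠ 0 := div_ne_zero hz₂ hz₁
  obtain ⟨n, M, hprod, hphase⟩ := exists_tendsto_zpow_mul_zpow hξ₀ hη₀ hdense hsecond
    (z₂ / z₁) (u := ‖z₁‖ / z₁) (by simp [hz₁])
  refine ⟨n, fun k => -M k, ?_, ?_, ?_⟩
  · convert hprod.div_const (z₂ / z₁) using 2
    · rw [zpow_neg]
      field_simp
    · exact (div_self hc).symm
  · rw [exp_neg_arg_mul_I hz₁]
    refine hphase.congr fun k => ?_
    rw [hξ, polar_div_norm_zpow hr]
  · have hnorm : Tendsto (fun k => (‖ξ ^ n k * η ^ M k‖ : ℂ)) atTop (𝓝 ‖z₂ / z₁‖) :=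
      (continuous_ofReal.comp continuous_norm).tendsto _ |>.comp hprod
    have hlim : ‖z₁‖ / z₁ * (‖z₂ / z₁‖ / (z₂ / z₁)) = (‖z₂‖ : ℂ) / z₂ := by
      have hz₁' : (‖z₁‖ : ℂ) ≠ 0 := by simpa using hz₁
      rw [norm_div]
      push_cast
      field_simp
    rw [exp_neg_arg_mul_I hz₂, ← hlim]
    refine (hphase.mul (hnorm.div hprod hc)).congr fun k => ?_
    rw [Pi.div_apply, ← div_norm_zpow_neg_eq hξ₀ hη₀, hη, polar_div_norm_zpow hR]

end
end

section
/- Let P, Q be distinct points of ℝ³ and n a fixed unit vector normal to the segment PQ. Let (D_k), (D'_k) be sequences in ℝ³ \ {0}, and let n_k, n'_k be unit vectors normal to the segments OD_k, OD'_k respectively (O the origin). Let f_k (resp. g_k) be the similarities of ℝ³ mapping P to O and Q to D_k (resp. D'_k), whose orthogonal parts send n to n_k (resp. n'_k). Then f_k⁻¹ ∘ g_k → Id (in the sense of uniform convergence on bounded sets) if and only if |OD_k|/|OD'_k| → 1, ⟨n_k, n'_k⟩ → 1, and the angle ∠D_k O D'_k → 0. -/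
open Filter Metric
open scoped Topology RealInnerProductSpace Matrix

/-! The map `f_k⁻¹ ∘ g_k` is `x ↦ P + a_k • W_k (x - P)` with `a_k` the ratio of the scale factors
and `W_k = U_k⁻¹ V_k` a rotation, so it tends to the identity uniformly on bounded sets iff
`a_k → 1` and `W_k → 1` pointwise. The three quantities on the right are `a_k⁻¹`, `⟪n, W_k n⟫` and
`∠(PQ, W_k PQ)`, so they say that `a_k → 1` and that `W_k` asymptotically fixes the orthogonal
vectors `n` and `PQ`. This pins down a rotation of `ℝ³`: in an orthonormal basis extending
`PQ/|PQ|, n`, the last diagonal entry of a matrix in `SO(3)` equals its cofactor. -/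

variable {ι : Type*} {l : Filter ι}

theorem Function.invFun_similarity_apply {K E : Type*} [Field K] [AddCommGroup E] [Module K E]
    {f g : E → E} {P : E} {lam mu : K} (hlam : lam ≠ 0) (U V : E ≃ₗ[K] E)
    (hf : ∀ x, f x = lam • U (x - P)) (hg : ∀ x, g x = mu • V (x - P)) (x : E) :
    Function.invFun f (g x) = P + (mu / lam) • (V.trans U.symm) (x - P) := by
  have hinj : f.Injective := fun y z hyz => by
    rw [hf, hf] at hyz
    simpa using U.injective (smul_right_injective E hlam hyz)
  have hpre : f (P + (mu / lam) • (V.trans U.symm) (x - P)) = g x := by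
    rw [hf, hg, add_sub_cancel_left, map_smul, LinearEquiv.trans_apply, U.apply_symm_apply,
      smul_smul, mul_div_cancel₀ _ hlam]
  rw [← hpre, Function.leftInverse_invFun hinj]

theorem Matrix.adjugate_eq_transpose_of_mem_specialOrthogonalGroup {n R : Type*} [Fintype n]
    [DecidableEq n] [CommRing R] {A : Matrix n n R}
    (hA : A ∈ Matrix.specialOrthogonalGroup n R) : A.adjugate = Aᵀ := by
  rw [Matrix.mem_specialOrthogonalGroup_iff, Matrix.mem_orthogonalGroup_iff'] at hA
  calc A.adjugate = Aᵀ * A * A.adjugate := by rw [hA.1, Matrix.one_mul]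
    _ = Aᵀ := by rw [Matrix.mul_assoc, Matrix.mul_adjugate, hA.2, one_smul, Matrix.mul_one]

theorem ContinuousLinearMap.tendsto_of_tendsto_apply {𝕜 E F : Type*} [NontriviallyNormedField 𝕜]
    [CompleteSpace 𝕜] [NormedAddCommGroup E] [NormedSpace 𝕜 E] [FiniteDimensional 𝕜 E]
    [NormedAddCommGroup F] [NormedSpace 𝕜 F] {T : ι → E →L[𝕜] F} {T₀ : E →L[𝕜] F}
    (h : ∀ v, Tendsto (fun k => T k v) l (𝓝 (T₀ v))) : Tendsto T l (𝓝 T₀) := by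
  let b := Module.finBasis 𝕜 E
  obtain ⟨C, -, hC⟩ := b.exists_opNorm_le (F := F)
  have hsum : Tendsto (fun k => ∑ i, ‖(T k - T₀) (b i)‖) l (𝓝 0) := by
    simpa using tendsto_finsetSum Finset.univ fun i _ =>
      (tendsto_iff_norm_sub_tendsto_zero.mp (h (b i)))
  rw [tendsto_iff_norm_sub_tendsto_zero]
  refine squeeze_zero (fun _ => norm_nonneg _)
    (fun k => hC (M := ∑ i, ‖(T k - T₀) (b i)‖) (by positivity) fun i => ?_)
    (by simpa using hsum.const_mul C)
  exact Finset.single_le_sum (f := fun i => ‖(T k - T₀) (b i)‖) (fun _ _ => norm_nonneg _)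
    (Finset.mem_univ i)

theorem tendstoUniformlyOn_affine_of_tendsto_id {𝕜 E : Type*} [NontriviallyNormedField 𝕜]
    [NormedAddCommGroup E] [NormedSpace 𝕜 E] {T : ι → E →L[𝕜] E}
    (hT : Tendsto T l (𝓝 (ContinuousLinearMap.id 𝕜 E))) (P : E) {s : Set E}
    (hs : Bornology.IsBounded s) :
    TendstoUniformlyOn (fun k x => P + T k (x - P)) id l s := by
  obtain ⟨R, hR⟩ := hs.exists_norm_le
  have hsmall : Tendsto (fun k => ‖ContinuousLinearMap.id 𝕜 E - T k‖ * (R + ‖P‖)) l (𝓝 0) := by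
    simpa [norm_sub_rev] using (tendsto_iff_norm_sub_tendsto_zero.mp hT).mul_const (R + ‖P‖)
  rw [Metric.tendstoUniformlyOn_iff]
  intro ε hε
  filter_upwards [hsmall.eventually_lt_const hε] with k hk x hx
  calc dist x (P + T k (x - P)) = ‖(ContinuousLinearMap.id 𝕜 E - T k) (x - P)‖ := by
        rw [dist_eq_norm]; simp only [sub_apply, ContinuousLinearMap.id_apply]
        congr 1; abel
    _ ≤ ‖ContinuousLinearMap.id 𝕜 E - T k‖ * ‖x - P‖ := ContinuousLinearMap.le_opNorm _ _
    _ ≤ ‖ContinuousLinearMap.id 𝕜 E - T k‖ * (R + ‖P‖) := by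
        gcongr; exact (norm_sub_le _ _).trans (by gcongr; exact hR x hx)
    _ < ε := hk

theorem forall_tendsto_smul_apply_iff {E : Type*} [NormedAddCommGroup E] [NormedSpace ℝ E]
    [Nontrivial E] {a : ι → ℝ} (ha : ∀ k, 0 < a k) (W : ι → E ≃ₗᵢ[ℝ] E) :
    (∀ v, Tendsto (fun k => a k • W k v) l (𝓝 v)) ↔
      Tendsto a l (𝓝 1) ∧ ∀ v, Tendsto (fun k => W k v) l (𝓝 v) := by
  refine ⟨fun h => ?_, fun ⟨ha1, hW⟩ v => by simpa using ha1.smul (hW v)⟩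
  obtain ⟨v, hv⟩ := exists_ne (0 : E)
  have ha1 : Tendsto a l (𝓝 1) := by
    have hnorm := (h v).norm.div_const ‖v‖
    simp only [norm_smul, LinearIsometryEquiv.norm_map, Real.norm_of_nonneg (ha _).le] at hnorm
    simpa [norm_ne_zero_iff.mpr hv] using hnorm
  refine ⟨ha1, fun w => ?_⟩
  have := (ha1.inv₀ one_ne_zero).smul (h w)
  simpa [inv_smul_smul₀ (ha _).ne'] using this

theorem tendstoUniformlyOn_closedBall_similarity_iff {E : Type*} [NormedAddCommGroup E]
    [NormedSpace ℝ E] [FiniteDimensional ℝ E] [Nontrivial E] (P : E) {a : ι → ℝ}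
    (ha : ∀ k, 0 < a k) (W : ι → E ≃ₗᵢ[ℝ] E) :
    (∀ r, 0 < r → TendstoUniformlyOn (fun k x => P + a k • W k (x - P)) id l (closedBall 0 r)) ↔
      Tendsto a l (𝓝 1) ∧ ∀ v, Tendsto (fun k => W k v) l (𝓝 v) := by
  rw [← forall_tendsto_smul_apply_iff ha]
  refine ⟨fun h v => ?_, fun h r _ => ?_⟩
  · have hmem : v + P ∈ closedBall (0 : E) (‖v + P‖ + 1) := by simp
    simpa using ((h _ (by positivity)).tendsto_at hmem).sub_const P
  · let T : ι → E →L[ℝ] E := fun k => a k • ((W k).toContinuousLinearEquiv : E →L[ℝ] E)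
    exact tendstoUniformlyOn_affine_of_tendsto_id (T := T)
      (ContinuousLinearMap.tendsto_of_tendsto_apply h) P isBounded_closedBall

section InnerProductSpace

variable {E : Type*} [NormedAddCommGroup E] [InnerProductSpace ℝ E]

theorem tendsto_nhds_iff_tendsto_inner_of_norm_eq {u : ι → E} {v : E} (hu : ∀ k, ‖u k‖ = ‖v‖) :
    Tendsto u l (𝓝 v) ↔ Tendsto (fun k => ⟪v, u k⟫) l (𝓝 (‖v‖ ^ 2)) := by
  refine ⟨fun h => by simpa using (tendsto_const_nhds (x := v)).inner (𝕜 := ℝ) h, fun h => ?_⟩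
  have hsq : Tendsto (fun k => ‖u k - v‖ ^ 2) l (𝓝 0) := by
    have hpolar : ∀ k, ‖u k - v‖ ^ 2 = 2 * (‖v‖ ^ 2 - ⟪v, u k⟫) := fun k => by
      rw [norm_sub_sq_real, hu, real_inner_comm]; ring
    have h2 := (h.const_sub (‖v‖ ^ 2)).const_mul 2
    rw [sub_self, mul_zero] at h2
    simpa only [hpolar] using h2
  rw [tendsto_iff_norm_sub_tendsto_zero]
  simpa [Real.sqrt_sq (norm_nonneg _)] using hsq.sqrt

open InnerProductGeometry in
theorem tendsto_angle_iff_of_norm_eq {u : ι → E} {v : E} (hv : v ≠ 0) (hu : ∀ k, ‖u k‖ = ‖v‖) :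
    Tendsto (fun k => angle v (u k)) l (𝓝 0) ↔ Tendsto u l (𝓝 v) := by
  have hv2 : ‖v‖ ^ 2 ≠ 0 := by positivity
  rw [tendsto_nhds_iff_tendsto_inner_of_norm_eq hu]
  have hcos : ∀ k, Real.cos (angle v (u k)) = ⟪v, u k⟫ / ‖v‖ ^ 2 := fun k => by
    rw [cos_angle, hu, sq]
  refine ⟨fun h => ?_, fun h => ?_⟩
  · have h1 := ((Real.continuous_cos.tendsto 0).comp h).const_mul (‖v‖ ^ 2)
    simpa [hcos, mul_div_cancel₀ _ hv2] using h1
  · have h1 := h.div_const (‖v‖ ^ 2)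
    rw [div_self hv2] at h1
    simpa [angle, hu, ← sq, Function.comp_def] using (Real.continuous_arccos.tendsto 1).comp h1

theorem LinearIsometryEquiv.inner_map_map_eq_inner_trans_symm (U V : E ≃ₗᵢ[ℝ] E) (x y : E) :
    ⟪U x, V y⟫ = ⟪x, (V.trans U.symm) y⟫ := by
  rw [← U.inner_map_map x]
  simp

open InnerProductGeometry in
theorem LinearIsometryEquiv.angle_smul_map_smul_map {c d : ℝ} (hc : 0 < c) (hd : 0 < d)
    (U V : E ≃ₗᵢ[ℝ] E) (x : E) : angle (c • U x) (d • V x) = angle x ((V.trans U.symm) x) := by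
  rw [angle_smul_left_of_pos _ _ hc, angle_smul_right_of_pos _ _ hd,
    ← U.toLinearIsometry.angle_map x]
  simp

theorem LinearIsometryEquiv.norm_smul_map_div_norm_smul_map {c d : ℝ} (hc : 0 < c) (hd : 0 < d)
    (U V : E ≃ₗᵢ[ℝ] E) {x : E} (hx : x ≠ 0) : ‖c • U x‖ / ‖d • V x‖ = (d / c)⁻¹ := by
  rw [norm_smul, norm_smul, U.norm_map, V.norm_map, Real.norm_of_nonneg hc.le,
    Real.norm_of_nonneg hd.le, mul_div_mul_right _ _ (norm_ne_zero_iff.mpr hx), inv_div]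

theorem LinearIsometryEquiv.inner_map_two_eq_cofactor (b : OrthonormalBasis (Fin 3) ℝ E)
    (W : E ≃ₗᵢ[ℝ] E) (hdet : LinearMap.det (W.toLinearEquiv : E →ₗ[ℝ] E) = 1) :
    ⟪b 2, W (b 2)⟫ = ⟪b 0, W (b 0)⟫ * ⟪b 1, W (b 1)⟫ - ⟪b 0, W (b 1)⟫ * ⟪b 1, W (b 0)⟫ := by
  set A := LinearMap.toMatrix b.toBasis b.toBasis (W.toLinearEquiv : E →ₗ[ℝ] E)
  have hA : A ∈ Matrix.specialOrthogonalGroup (Fin 3) ℝ :=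
    Matrix.mem_specialOrthogonalGroup_iff.mpr
      ⟨W.toMatrix_mem_unitaryGroup b b, by rw [LinearMap.det_toMatrix, hdet]⟩
  have hentry : ∀ i j, A i j = ⟪b i, W (b j)⟫ := fun i j => by
    simp [A, LinearMap.toMatrix_apply, OrthonormalBasis.repr_apply_apply]
  have h22 := congrFun₂ (Matrix.adjugate_eq_transpose_of_mem_specialOrthogonalGroup hA) 2 2
  simp [Matrix.adjugate_fin_three, hentry] at h22
  linarith

theorem OrthonormalBasis.tendsto_apply_of_tendsto_apply_zero_one
    (b : OrthonormalBasis (Fin 3) ℝ E) {W : ι → E ≃ₗᵢ[ℝ] E}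
    (hdet : ∀ k, LinearMap.det ((W k).toLinearEquiv : E →ₗ[ℝ] E) = 1)
    (h0 : Tendsto (fun k => W k (b 0)) l (𝓝 (b 0)))
    (h1 : Tendsto (fun k => W k (b 1)) l (𝓝 (b 1))) (v : E) :
    Tendsto (fun k => W k v) l (𝓝 v) := by
  have hb : ∀ i j, ⟪b i, b j⟫ = if i = j then 1 else 0 := orthonormal_iff_ite.mp b.orthonormal
  have hentry : ∀ i j, (j = 0 ∨ j = 1) →
      Tendsto (fun k => ⟪b i, W k (b j)⟫) l (𝓝 ⟪b i, b j⟫) := by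
    rintro i j (rfl | rfl)
    · exact (tendsto_const_nhds (x := b i)).inner (𝕜 := ℝ) h0
    · exact (tendsto_const_nhds (x := b i)).inner (𝕜 := ℝ) h1
  have h2 : Tendsto (fun k => W k (b 2)) l (𝓝 (b 2)) := by
    rw [tendsto_nhds_iff_tendsto_inner_of_norm_eq fun k => (W k).norm_map _]
    simp_rw [fun k => (W k).inner_map_two_eq_cofactor b (hdet k)]
    have hlim := ((hentry 0 0 (by simp)).mul (hentry 1 1 (by simp))).sub
      ((hentry 0 1 (by simp)).mul (hentry 1 0 (by simp)))
    simpa [hb] using hlim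
  have hbasis : ∀ i, Tendsto (fun k => W k (b i)) l (𝓝 (b i)) := by
    intro i; fin_cases i
    exacts [h0, h1, h2]
  rw [← b.sum_repr v]
  simp only [map_sum, map_smul]
  exact tendsto_finsetSum _ fun i _ => (hbasis i).const_smul _

theorem forall_tendsto_apply_iff_of_inner_eq_zero (hE : Module.finrank ℝ E = 3)
    {W : ι → E ≃ₗᵢ[ℝ] E} (hdet : ∀ k, LinearMap.det ((W k).toLinearEquiv : E →ₗ[ℝ] E) = 1)
    {u w : E} (hu : u ≠ 0) (hw : w ≠ 0) (huw : ⟪u, w⟫ = 0) :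
    (∀ v, Tendsto (fun k => W k v) l (𝓝 v)) ↔
      Tendsto (fun k => W k u) l (𝓝 u) ∧ Tendsto (fun k => W k w) l (𝓝 w) := by
  refine ⟨fun h => ⟨h u, h w⟩, fun ⟨hWu, hWw⟩ => ?_⟩
  have : FiniteDimensional ℝ E := Module.finite_of_finrank_eq_succ hE
  set e : Fin 3 → E := ![‖u‖⁻¹ • u, ‖w‖⁻¹ • w, 0]
  have he : Orthonormal ℝ (Set.domRestrict {0, 1} e) := by
    rw [orthonormal_iff_ite]
    rintro ⟨i, hi⟩ ⟨j, hj⟩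
    simp only [Set.mem_insert_iff, Set.mem_singleton_iff] at hi hj
    rcases hi with rfl | rfl <;> rcases hj with rfl | rfl <;>
      simp [e, real_inner_smul_left, real_inner_smul_right, huw, real_inner_comm u w,
        norm_smul, hu, hw]
  obtain ⟨b, hb⟩ := he.exists_orthonormalBasis_extension_of_card_eq (by simp [hE])
  refine b.tendsto_apply_of_tendsto_apply_zero_one hdet ?_ ?_
  · rw [hb 0 (by simp)]; simpa [e] using hWu.const_smul ‖u‖⁻¹
  · rw [hb 1 (by simp)]; simpa [e] using hWw.const_smul ‖w‖⁻¹

end InnerProductSpace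

theorem stmt_14_general
    (P Q : EuclideanSpace ℝ (Fin 3)) (hPQ : P ≠ Q)
    (n : EuclideanSpace ℝ (Fin 3)) (hn : ‖n‖ = 1) (hnPQ : (inner ℝ n (Q - P) : ℝ) = 0)
    (D D' : ℕ → EuclideanSpace ℝ (Fin 3))
    (nk n'k : ℕ → EuclideanSpace ℝ (Fin 3))
    (f g : ℕ → EuclideanSpace ℝ (Fin 3) → EuclideanSpace ℝ (Fin 3))
    (hf : ∀ k, ∃ lam : ℝ, 0 < lam ∧
      ∃ U : EuclideanSpace ℝ (Fin 3) ≃ₗᵢ[ℝ] EuclideanSpace ℝ (Fin 3),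
        LinearMap.det (U.toLinearEquiv : EuclideanSpace ℝ (Fin 3) →ₗ[ℝ] EuclideanSpace ℝ (Fin 3)) = 1 ∧
        U n = nk k ∧ (∀ x, f k x = lam • U (x - P)))
    (hg : ∀ k, ∃ lam : ℝ, 0 < lam ∧
      ∃ U : EuclideanSpace ℝ (Fin 3) ≃ₗᵢ[ℝ] EuclideanSpace ℝ (Fin 3),
        LinearMap.det (U.toLinearEquiv : EuclideanSpace ℝ (Fin 3) →ₗ[ℝ] EuclideanSpace ℝ (Fin 3)) = 1 ∧
        U n = n'k k ∧ (∀ x, g k x = lam • U (x - P)))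
    (hfQ : ∀ k, f k Q = D k) (hgQ : ∀ k, g k Q = D' k) :
    (∀ r : ℝ, 0 < r →
      TendstoUniformlyOn (fun k x => Function.invFun (f k) (g k x)) id atTop
        (closedBall (0 : EuclideanSpace ℝ (Fin 3)) r)) ↔
    (Tendsto (fun k => ‖D k‖ / ‖D' k‖) atTop (nhds 1) ∧
     Tendsto (fun k => (inner ℝ (nk k) (n'k k) : ℝ)) atTop (nhds 1) ∧
     Tendsto (fun k => InnerProductGeometry.angle (D k) (D' k)) atTop (nhds 0)) := by
  choose lamf hlamf U hUdet hUn hfx using hf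
  choose lamg hlamg V hVdet hVn hgx using hg
  set W := fun k => (V k).trans (U k).symm
  have ha : ∀ k, 0 < lamg k / lamf k := fun k => div_pos (hlamg k) (hlamf k)
  have hWdet : ∀ k, LinearMap.det (W k).toLinearEquiv.toLinearMap = 1 := fun k => by
    change LinearMap.det ((U k).toLinearEquiv.symm.toLinearMap ∘ₗ (V k).toLinearEquiv) = 1
    rw [LinearMap.det_comp, LinearEquiv.det_coe_symm, hUdet, hVdet, inv_one, one_mul]
  have hinv : ∀ k x, Function.invFun (f k) (g k x) = P + (lamg k / lamf k) • W k (x - P) :=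
    fun k x => Function.invFun_similarity_apply (hlamf k).ne' (U k).toLinearEquiv
      (V k).toLinearEquiv (hfx k) (hgx k) x
  have hq : Q - P ≠ 0 := sub_ne_zero.mpr hPQ.symm
  have hn0 : n ≠ 0 := norm_ne_zero_iff.mp (by rw [hn]; exact one_ne_zero)
  simp only [hinv]
  simp only [← hfQ, ← hgQ, hfx, hgx, ← hUn, ← hVn, hlamf, hlamg, hq, ne_eq, not_false_eq_true,
    LinearIsometryEquiv.norm_smul_map_div_norm_smul_map,
    LinearIsometryEquiv.inner_map_map_eq_inner_trans_symm,
    LinearIsometryEquiv.angle_smul_map_smul_map]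
  rw [tendstoUniformlyOn_closedBall_similarity_iff P ha W,
    ← tendsto_inv_iff₀ (x := (1 : ℝ)) one_ne_zero, inv_one,
    forall_tendsto_apply_iff_of_inner_eq_zero finrank_euclideanSpace_fin hWdet hq hn0
      (by rwa [real_inner_comm]),
    tendsto_angle_iff_of_norm_eq hq fun k => (W k).norm_map _,
    tendsto_nhds_iff_tendsto_inner_of_norm_eq (v := n) fun k => (W k).norm_map _, hn, one_pow]
  tauto

theorem stmt_14
    (P Q : EuclideanSpace ℝ (Fin 3)) (hPQ : P ≠ Q)
    (n : EuclideanSpace ℝ (Fin 3)) (hn : ‖n‖ = 1) (hnPQ : (inner ℝ n (Q - P) : ℝ) = 0)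
    (D D' : ℕ → EuclideanSpace ℝ (Fin 3))
    (hD : ∀ k, D k ≠ 0) (hD' : ∀ k, D' k ≠ 0)
    (nk n'k : ℕ → EuclideanSpace ℝ (Fin 3))
    (hnk : ∀ k, ‖nk k‖ = 1) (hn'k : ∀ k, ‖n'k k‖ = 1)
    (hnkD : ∀ k, (inner ℝ (nk k) (D k) : ℝ) = 0)
    (hn'kD : ∀ k, (inner ℝ (n'k k) (D' k) : ℝ) = 0)
    (f g : ℕ → EuclideanSpace ℝ (Fin 3) → EuclideanSpace ℝ (Fin 3))
    (hf : ∀ k, ∃ lam : ℝ, 0 < lam ∧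
      ∃ U : EuclideanSpace ℝ (Fin 3) ≃ₗᵢ[ℝ] EuclideanSpace ℝ (Fin 3),
        LinearMap.det (U.toLinearEquiv : EuclideanSpace ℝ (Fin 3) →ₗ[ℝ] EuclideanSpace ℝ (Fin 3)) = 1 ∧
        U n = nk k ∧ (∀ x, f k x = lam • U (x - P)))
    (hg : ∀ k, ∃ lam : ℝ, 0 < lam ∧
      ∃ U : EuclideanSpace ℝ (Fin 3) ≃ₗᵢ[ℝ] EuclideanSpace ℝ (Fin 3),
        LinearMap.det (U.toLinearEquiv : EuclideanSpace ℝ (Fin 3) →ₗ[ℝ] EuclideanSpace ℝ (Fin 3)) = 1 ∧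
        U n = n'k k ∧ (∀ x, g k x = lam • U (x - P)))
    (hfQ : ∀ k, f k Q = D k) (hgQ : ∀ k, g k Q = D' k) :
    (∀ r : ℝ, 0 < r →
      TendstoUniformlyOn (fun k x => Function.invFun (f k) (g k x)) id atTop
        (closedBall (0 : EuclideanSpace ℝ (Fin 3)) r)) ↔
    (Tendsto (fun k => ‖D k‖ / ‖D' k‖) atTop (nhds 1) ∧
     Tendsto (fun k => (inner ℝ (nk k) (n'k k) : ℝ)) atTop (nhds 1) ∧
     Tendsto (fun k => InnerProductGeometry.angle (D k) (D' k)) atTop (nhds 0)) :=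
  stmt_14_general P Q hPQ n hn hnPQ D D' nk n'k f g hf hg hfQ hgQ
end

section
/- Let β₀ = arctan(1/2) and let V₁, V₂ be two closed right circular bicones (double cones) in ℝ³ with common vertex at the origin, each with half-angle β₀ between axis and generator, whose axes make an angle θ + β₀ with each other where 0 < θ < β₀. If the surfaces of the two cones meet along a common generator, the dihedral angle between the tangent planes to the two cone surfaces along that common generator equals arccos(4 − 5cos(β₀ + θ)). -/
open Real InnerProductGeometry

/- Along the common generator `u`, the normal of the tangent plane of the cone with axis `aᵢ`
lies in the plane of `u` and `aᵢ`, orthogonal to `u`: it is `aᵢ - cos β₀ • u`. Both such vectors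
have squared length `sin² β₀`, and their inner product is `cos² β₀ - ⟪a₁, a₂⟫`; with
`cos² β₀ = 4/5` the cosine of the dihedral angle is `4 - 5 cos (β₀ + θ)`. -/

section RejectAlongUnit

variable {E : Type*} [NormedAddCommGroup E] [InnerProductSpace ℝ E]

theorem norm_sub_smul_sq_of_inner_eq {a u : E} {c : ℝ} (ha : ‖a‖ = 1) (hu : ‖u‖ = 1)
    (hua : inner ℝ u a = c) : ‖a - c • u‖ ^ 2 = 1 - c ^ 2 := by
  rw [norm_sub_sq_real, real_inner_smul_right, real_inner_comm, hua, norm_smul, ha, hu,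
    Real.norm_eq_abs, mul_one, sq_abs]
  ring

theorem inner_sub_smul_smul_sub_of_inner_eq {a₁ a₂ u : E} {c : ℝ} (hu : ‖u‖ = 1)
    (hua₁ : inner ℝ u a₁ = c) (hua₂ : inner ℝ u a₂ = c) :
    inner ℝ (a₁ - c • u) (c • u - a₂) = c ^ 2 - inner ℝ a₁ a₂ := by
  rw [inner_sub_left, inner_sub_right, inner_sub_right, real_inner_smul_right,
    real_inner_smul_left, real_inner_smul_left, real_inner_smul_right, real_inner_comm u a₁,
    hua₁, hua₂, real_inner_self_eq_norm_sq, hu]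
  ring

theorem angle_sub_smul_smul_sub_of_inner_eq {a₁ a₂ u : E} {c : ℝ} (ha₁ : ‖a₁‖ = 1)
    (ha₂ : ‖a₂‖ = 1) (hu : ‖u‖ = 1) (hua₁ : inner ℝ u a₁ = c) (hua₂ : inner ℝ u a₂ = c) :
    angle (a₁ - c • u) (c • u - a₂) = arccos ((c ^ 2 - inner ℝ a₁ a₂) / (1 - c ^ 2)) := by
  have hnorm_eq : ‖c • u - a₂‖ = ‖a₁ - c • u‖ := by
    rw [norm_sub_rev, ← sq_eq_sq₀ (norm_nonneg _) (norm_nonneg _),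
      norm_sub_smul_sq_of_inner_eq ha₂ hu hua₂, norm_sub_smul_sq_of_inner_eq ha₁ hu hua₁]
  rw [angle, inner_sub_smul_smul_sub_of_inner_eq hu hua₁ hua₂, hnorm_eq, ← sq,
    norm_sub_smul_sq_of_inner_eq ha₁ hu hua₁]

end RejectAlongUnit

theorem cos_arctan_one_half_sq : cos (arctan (1 / 2)) ^ 2 = 4 / 5 := by
  rw [cos_arctan, div_pow, one_pow, sq_sqrt (by positivity)]
  norm_num

theorem stmt_17_general (β₀ θ : ℝ) (hβ₀ : β₀ = Real.arctan (1 / 2))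
    (a₁ a₂ u : EuclideanSpace ℝ (Fin 3))
    (ha₁ : ‖a₁‖ = 1) (ha₂ : ‖a₂‖ = 1) (hu : ‖u‖ = 1)
    (haxes : (inner ℝ a₁ a₂ : ℝ) = Real.cos (β₀ + θ))
    (hgen₁ : (inner ℝ u a₁ : ℝ) = Real.cos β₀)
    (hgen₂ : (inner ℝ u a₂ : ℝ) = Real.cos β₀) :
    InnerProductGeometry.angle (a₁ - Real.cos β₀ • u) (Real.cos β₀ • u - a₂) =
      Real.arccos (4 - 5 * Real.cos (β₀ + θ)) := by
  rw [angle_sub_smul_smul_sub_of_inner_eq ha₁ ha₂ hu hgen₁ hgen₂, haxes, hβ₀,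
    cos_arctan_one_half_sq]
  congr 1
  ring

theorem stmt_17 (β₀ θ : ℝ) (hβ₀ : β₀ = Real.arctan (1 / 2))
    (hθ0 : 0 < θ) (hθ : θ < β₀)
    (a₁ a₂ u : EuclideanSpace ℝ (Fin 3))
    (ha₁ : ‖a₁‖ = 1) (ha₂ : ‖a₂‖ = 1) (hu : ‖u‖ = 1)
    (haxes : (inner ℝ a₁ a₂ : ℝ) = Real.cos (β₀ + θ))
    (hgen₁ : (inner ℝ u a₁ : ℝ) = Real.cos β₀)
    (hgen₂ : (inner ℝ u a₂ : ℝ) = Real.cos β₀) :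
    InnerProductGeometry.angle (a₁ - Real.cos β₀ • u) (Real.cos β₀ • u - a₂) =
      Real.arccos (4 - 5 * Real.cos (β₀ + θ)) :=
  stmt_17_general β₀ θ hβ₀ a₁ a₂ u ha₁ ha₂ hu haxes hgen₁ hgen₂
end
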